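/- arXiv:1009.3205 — 6 statements merged into one kernel-verified Lean document; each statement's English description precedes it below -/
import Mathlib

section
/- Let Γ be a finite graph, S ⊆ E(Γ), q a rational 0-cochain with integral total degree, and d a 0-cochain with |d| = |q| - |S|. The set S⁺_d of vertex subsets W maximizing ε(d, W) is stable under intersection: if W1, W2 ∈ S⁺_d then W1 ∩ W2 ∈ S⁺_d. -/
open Finset

variable {V E : Type}

/-- Number of edges in `F` joining a vertex of `A` with a vertex of `B`. -/
def valS [DecidableEq V] [DecidableEq E] (ends : E → V × V) (F : Finset E)
    (A B : Finset V) : ℕ :=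
  (F.filter (fun e => ((ends e).1 ∈ A ∧ (ends e).2 ∈ B) ∨
    ((ends e).1 ∈ B ∧ (ends e).2 ∈ A))).card

/-- Number of edges of the graph joining `A` and `B`. -/
def valAB [Fintype E] [DecidableEq V] [DecidableEq E] (ends : E → V × V)
    (A B : Finset V) : ℕ :=
  valS ends Finset.univ A B

/-- Number of edges of `F` with both endpoints in `W` (loops included). -/
def insideE [DecidableEq V] [DecidableEq E] (ends : E → V × V) (W : Finset V)
    (F : Finset E) : ℕ :=
  (F.filter (fun e => (ends e).1 ∈ W ∧ (ends e).2 ∈ W)).card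

/-- The Laplacian of the graph with vertex set `V` and edge set `F`. -/
def lapF [Fintype V] [Fintype E] [DecidableEq V] [DecidableEq E] (ends : E → V × V)
    (F : Finset E) (d : V → ℤ) (v : V) : ℤ :=
  -d v * (valS ends F {v} {v}ᶜ : ℤ) +
    ∑ w ∈ Finset.univ.erase v, d w * (valS ends F {v} {w} : ℤ)

/-- Characteristic 0-cochain of a set of vertices. -/
def chi [DecidableEq V] (A : Finset V) (v : V) : ℤ := if v ∈ A then 1 else 0

/-- Reachability using edges belonging to `F`. -/
def Reaches (ends : E → V × V) (F : Finset E) (u v : V) : Prop :=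
  Relation.ReflTransGen (fun a b => ∃ e ∈ F, ends e = (a, b) ∨ ends e = (b, a)) u v

/-- Connectedness of the graph with vertex set `V` and edge set `F`. -/
def ConnF (ends : E → V × V) (F : Finset E) : Prop :=
  ∀ u v : V, Reaches ends F u v

/-- Complexity: the number of spanning trees using edges from `F`
(a spanning tree is a connected spanning subgraph with `|V| - 1` edges). -/
noncomputable def complexity [Fintype V] (ends : E → V × V) (F : Finset E) : ℕ :=
  {T : Finset E | T ⊆ F ∧ ConnF ends T ∧ T.card = Fintype.card V - 1}.ncard

/-- The quantity η(d, W) = -d_W - |S ∩ E(Γ[W])| + q_W - val(W)/2. -/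
def eta [Fintype V] [Fintype E] [DecidableEq V] [DecidableEq E]
    (ends : E → V × V) (S : Finset E) (q : V → ℚ) (d : V → ℤ) (W : Finset V) : ℚ :=
  -(∑ w ∈ W, (d w : ℚ)) - (insideE ends W S : ℚ) + (∑ w ∈ W, q w)
    - (valAB ends W Wᶜ : ℚ) / 2

/-- The quantity ε(d, W) = d_W + |S ∩ E(Γ[W])| - q_W - val(W)/2 + val_S(W). -/
def eps [Fintype V] [Fintype E] [DecidableEq V] [DecidableEq E]
    (ends : E → V × V) (S : Finset E) (q : V → ℚ) (d : V → ℤ) (W : Finset V) : ℚ :=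
  (∑ w ∈ W, (d w : ℚ)) + (insideE ends W S : ℚ) - (∑ w ∈ W, q w)
    - (valAB ends W Wᶜ : ℚ) / 2 + (valS ends S W Wᶜ : ℚ)

/-- A 0-cochain `d` is semistable on Γ∖S with respect to `q`. -/
def Semistable [Fintype V] [Fintype E] [DecidableEq V] [DecidableEq E]
    (ends : E → V × V) (S : Finset E) (q : V → ℚ) (d : V → ℤ) : Prop :=
  ((∑ v, d v : ℤ) : ℚ) = (∑ v, q v) - S.card ∧
  ∀ W : Finset V, W ≠ Finset.univ →
    (∑ w ∈ W, (d w : ℚ)) + (insideE ends W S : ℚ) ≥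
      (∑ w ∈ W, q w) - (valAB ends W Wᶜ : ℚ) / 2

/-- A 0-cochain `d` is `v₀`-quasistable on Γ∖S with respect to `q`. -/
def Quasistable [Fintype V] [Fintype E] [DecidableEq V] [DecidableEq E]
    (ends : E → V × V) (S : Finset E) (q : V → ℚ) (v₀ : V) (d : V → ℤ) : Prop :=
  Semistable ends S q d ∧
  ∀ W : Finset V, W ≠ Finset.univ → v₀ ∈ W →
    (∑ w ∈ W, (d w : ℚ)) + (insideE ends W S : ℚ) >
      (∑ w ∈ W, q w) - (valAB ends W Wᶜ : ℚ) / 2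

/-- Connectedness of the subgraph induced on `A`. -/
def ConnOn (ends : E → V × V) (A : Finset V) : Prop :=
  ∀ u ∈ A, ∀ v ∈ A,
    Relation.ReflTransGen
      (fun a b => a ∈ A ∧ b ∈ A ∧ ∃ e : E, ends e = (a, b) ∨ ends e = (b, a)) u v

/-- `C` is a connected component of the subgraph induced on `A`. -/
def IsCompOf [DecidableEq V] (ends : E → V × V) (C A : Finset V) : Prop :=
  C.Nonempty ∧ C ⊆ A ∧ ConnOn ends C ∧
  ∀ e : E, ¬ (((ends e).1 ∈ C ∧ (ends e).2 ∈ A \ C) ∨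
    ((ends e).1 ∈ A \ C ∧ (ends e).2 ∈ C))

/-- An edge is a bridge (separating node) if removing it disconnects the graph. -/
def Bridge [Fintype E] [DecidableEq E] (ends : E → V × V) (e : E) : Prop :=
  ¬ ConnF ends (Finset.univ.erase e)

/-- `e` is a boundary edge of `W`: it joins `W` with its complement. -/
def Boundary (ends : E → V × V) (W : Finset V) (e : E) : Prop :=
  ((ends e).1 ∈ W ∧ (ends e).2 ∉ W) ∨ ((ends e).1 ∉ W ∧ (ends e).2 ∈ W)

/-- `W` is a spine: all of its boundary edges are bridges (separating nodes). -/
def Spine [Fintype E] [DecidableEq E] (ends : E → V × V) (W : Finset V) : Prop :=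
  ∀ e : E, Boundary ends W e → Bridge ends e

/-- The polarization `q` is integral at the subcurve `W`: for every connected
component `C` of `W` and of `Wᶜ`, the number q_C - δ_C/2 is an integer. -/
def IntegralAt [Fintype V] [Fintype E] [DecidableEq V] [DecidableEq E]
    (ends : E → V × V) (q : V → ℚ) (W : Finset V) : Prop :=
  ∀ C : Finset V, (IsCompOf ends C W ∨ IsCompOf ends C Wᶜ) →
    ∃ n : ℤ, (∑ w ∈ C, q w) - (valAB ends C Cᶜ : ℚ) / 2 = (n : ℚ)

/-- The polarization `q` is general: not integral at any proper subcurve. -/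
def GeneralPol [Fintype V] [Fintype E] [DecidableEq V] [DecidableEq E]
    (ends : E → V × V) (q : V → ℚ) : Prop :=
  ∀ W : Finset V, W.Nonempty → W ≠ Finset.univ → ¬ IntegralAt ends q W

/-- The polarization `q` is non-degenerate: not integral at any proper subcurve
which is not a spine. -/
def NonDegPol [Fintype V] [Fintype E] [DecidableEq V] [DecidableEq E]
    (ends : E → V × V) (q : V → ℚ) : Prop :=
  ∀ W : Finset V, W.Nonempty → W ≠ Finset.univ → ¬ Spine ends W →
    ¬ IntegralAt ends q W

/-- A line bundle of multidegree `d` is `q`-semistable. -/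
def SemistableLB [Fintype V] [Fintype E] [DecidableEq V] [DecidableEq E]
    (ends : E → V × V) (q : V → ℚ) (d : V → ℤ) : Prop :=
  ((∑ v, d v : ℤ) : ℚ) = (∑ v, q v) ∧
  ∀ W : Finset V, W ≠ Finset.univ →
    ((∑ w ∈ W, d w : ℤ) : ℚ) ≥ (∑ w ∈ W, q w) - (valAB ends W Wᶜ : ℚ) / 2


def epsEdge [DecidableEq E] (ends : E → V × V) (S : Finset E) (W : Finset V)
    [DecidableEq V] (e : E) : ℚ :=
  (if e ∈ S ∧ ((ends e).1 ∈ W ∧ (ends e).2 ∈ W) then (1:ℚ) else 0)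
  - (if ((ends e).1 ∈ W ∧ (ends e).2 ∉ W) ∨ ((ends e).1 ∉ W ∧ (ends e).2 ∈ W)
      then (1:ℚ) else 0) / 2
  + (if e ∈ S ∧ (((ends e).1 ∈ W ∧ (ends e).2 ∉ W) ∨ ((ends e).1 ∉ W ∧ (ends e).2 ∈ W))
      then (1:ℚ) else 0)

lemma eps_eq [Fintype V] [Fintype E] [DecidableEq V] [DecidableEq E]
    (ends : E → V × V) (S : Finset E) (q : V → ℚ) (d : V → ℤ) (W : Finset V) :
    eps ends S q d W = (∑ w ∈ W, ((d w : ℚ) - q w)) + ∑ e, epsEdge ends S W e := by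
  have hfil : ∀ (p : E → Prop) [DecidablePred p],
      (S.filter p).card = (univ.filter (fun e => e ∈ S ∧ p e)).card := by
    intro p _
    congr 1
    ext e
    simp
  unfold eps insideE valAB valS epsEdge
  rw [hfil, hfil]
  simp only [Finset.sum_add_distrib, Finset.sum_sub_distrib, ← Finset.sum_div,
    Finset.sum_boole, Finset.mem_compl]
  push_cast
  ring_nf

lemma epsEdge_mono [DecidableEq E] [DecidableEq V] (ends : E → V × V) (S : Finset E)
    (A B : Finset V) (e : E) :
    epsEdge ends S A e + epsEdge ends S B e ≤
      epsEdge ends S (A ∪ B) e + epsEdge ends S (A ∩ B) e := by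
  unfold epsEdge
  by_cases hS : e ∈ S <;>
  by_cases h1 : (ends e).1 ∈ A <;>
  by_cases h2 : (ends e).1 ∈ B <;>
  by_cases h3 : (ends e).2 ∈ A <;>
  by_cases h4 : (ends e).2 ∈ B <;>
  simp [Finset.mem_union, Finset.mem_inter, hS, h1, h2, h3, h4] <;> norm_num

lemma eps_submod [Fintype V] [Fintype E] [DecidableEq V] [DecidableEq E]
    (ends : E → V × V) (S : Finset E) (q : V → ℚ) (d : V → ℤ) (A B : Finset V) :
    eps ends S q d A + eps ends S q d B ≤
      eps ends S q d (A ∪ B) + eps ends S q d (A ∩ B) := by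
  rw [eps_eq, eps_eq, eps_eq, eps_eq]
  have hvert : (∑ w ∈ A ∪ B, ((d w : ℚ) - q w)) + ∑ w ∈ A ∩ B, ((d w : ℚ) - q w)
      = (∑ w ∈ A, ((d w : ℚ) - q w)) + ∑ w ∈ B, ((d w : ℚ) - q w) :=
    Finset.sum_union_inter
  have hedge : (∑ e, epsEdge ends S A e) + ∑ e, epsEdge ends S B e ≤
      (∑ e, epsEdge ends S (A ∪ B) e) + ∑ e, epsEdge ends S (A ∩ B) e := by
    rw [← Finset.sum_add_distrib, ← Finset.sum_add_distrib]
    exact Finset.sum_le_sum fun e _ => epsEdge_mono ends S A B e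
  linarith

/-- the set of subsets maximizing ε(d, ·) is stable under intersection. -/
theorem stmt6 [Fintype V] [Fintype E] [DecidableEq V] [DecidableEq E] (ends : E → V × V) (S : Finset E) (q : V → ℚ) (qz : ℤ)
    (hq : ∑ v, q v = (qz : ℚ)) (d : V → ℤ)
    (hd : ((∑ v, d v : ℤ) : ℚ) = (∑ v, q v) - S.card)
    (W1 W2 : Finset V)
    (h1 : ∀ W : Finset V, eps ends S q d W ≤ eps ends S q d W1)
    (h2 : ∀ W : Finset V, eps ends S q d W ≤ eps ends S q d W2) :
    eps ends S q d (W1 ∩ W2) = eps ends S q d W1 := by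
  have key := eps_submod ends S q d W1 W2
  have hu := h1 (W1 ∪ W2)
  have hi := h1 (W1 ∩ W2)
  have h12 := h2 W1
  have h21 := h1 W2
  linarith
end

section
/- Let Γ be a finite graph, v₀ ∈ V(Γ), S ⊆ E(Γ), and q ∈ C⁰(Γ,ℚ) with |q| ∈ ℤ. If the set B^{v₀}_{Γ∖S}(q) of v₀-quasistable 0-cochains on Γ∖S with respect to q is nonempty, then the graph Γ∖S is connected. -/
open Finset

variable {V E : Type}

/-!
If Γ∖S were disconnected, let W be the component of Γ∖S containing v₀: every edge of Γ leaving W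
lies in S, so val(W) = val_S(W). Adding the strict inequality for W to the inequality for Wᶜ and
using |d| = |q| - |S| gives |S ∩ E(Γ[W])| + |S ∩ E(Γ[Wᶜ])| + val_S(W) > |S|, whereas these three
sets partition S.
-/

section

variable {ends : E → V × V}

theorem Reaches.symm {F : Finset E} {u v : V} (h : Reaches ends F u v) :
    Reaches ends F v u := by
  induction h with
  | refl => exact .refl
  | tail _ hstep ih =>
    obtain ⟨e, he, hends⟩ := hstep
    exact .head ⟨e, he, hends.symm⟩ ih

theorem connF_of_forall_reaches {F : Finset E} {v₀ : V} (h : ∀ v, Reaches ends F v₀ v) :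
    ConnF ends F :=
  fun u v => (h u).symm.trans (h v)

open Classical in
theorem notMem_of_boundary_reachableSet [Fintype V] {F : Finset E} {v₀ : V} {e : E}
    (he : Boundary ends {w | Reaches ends F v₀ w} e) : e ∉ F := by
  intro heF
  simp only [Boundary, Finset.mem_filter, Finset.mem_univ, true_and] at he
  rcases he with ⟨h₁, h₂⟩ | ⟨h₁, h₂⟩
  · exact h₂ (h₁.tail ⟨e, heF, Or.inl rfl⟩)
  · exact h₁ (h₂.tail ⟨e, heF, Or.inr rfl⟩)

theorem valS_comm [DecidableEq V] [DecidableEq E] (F : Finset E) (A B : Finset V) :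
    valS ends F A B = valS ends F B A := by
  unfold valS
  congr 1
  ext e
  simp only [Finset.mem_filter]
  tauto

theorem valAB_eq_valS_of_boundary_subset [Fintype V] [Fintype E] [DecidableEq V]
    [DecidableEq E] {W : Finset V} {S : Finset E}
    (hW : ∀ e, Boundary ends W e → e ∈ S) : valAB ends W Wᶜ = valS ends S W Wᶜ := by
  unfold valAB valS
  congr 1
  ext e
  simp only [Finset.mem_filter, Finset.mem_univ, true_and, Finset.mem_compl]
  exact ⟨fun he => ⟨hW e he, he⟩, And.right⟩

theorem insideE_add_insideE_compl_add_valS [Fintype V] [DecidableEq V] [DecidableEq E]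
    (W : Finset V) (S : Finset E) :
    insideE ends W S + insideE ends Wᶜ S + valS ends S W Wᶜ = S.card := by
  rw [insideE, insideE, valS, Finset.card_filter, Finset.card_filter, Finset.card_filter,
    ← Finset.sum_add_distrib, ← Finset.sum_add_distrib, Finset.card_eq_sum_ones]
  refine Finset.sum_congr rfl fun e _ => ?_
  simp only [Finset.mem_compl]
  split_ifs <;> tauto

theorem Quasistable.false_of_boundary_subset [Fintype V] [Fintype E] [DecidableEq V]
    [DecidableEq E] {S : Finset E} {q : V → ℚ}
    {v₀ : V} {d : V → ℤ} (h : Quasistable ends S q v₀ d) {W : Finset V} (hW : W ≠ Finset.univ)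
    (hv₀ : v₀ ∈ W) (hS : ∀ e, Boundary ends W e → e ∈ S) : False := by
  obtain ⟨⟨hdeg, hsemi⟩, hquasi⟩ := h
  have hWc : Wᶜ ≠ Finset.univ := fun hWc =>
    Finset.mem_compl.mp (hWc ▸ Finset.mem_univ v₀) hv₀
  have hstrict := hquasi W hW hv₀
  have hweak := hsemi Wᶜ hWc
  rw [compl_compl, valAB, valS_comm, ← valAB, valAB_eq_valS_of_boundary_subset hS] at hweak
  rw [valAB_eq_valS_of_boundary_subset hS] at hstrict
  have hd : (∑ w ∈ W, (d w : ℚ)) + ∑ w ∈ Wᶜ, (d w : ℚ) = ((∑ v, d v : ℤ) : ℚ) := by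
    push_cast
    exact Finset.sum_add_sum_compl W _
  have hq : (∑ w ∈ W, q w) + ∑ w ∈ Wᶜ, q w = ∑ v, q v := Finset.sum_add_sum_compl W _
  have hcard : (insideE ends W S : ℚ) + insideE ends Wᶜ S + valS ends S W Wᶜ = S.card := by
    exact_mod_cast insideE_add_insideE_compl_add_valS W S
  linarith

end

theorem stmt7_general [Fintype V] [Fintype E] [DecidableEq V] [DecidableEq E] (ends : E → V × V) (S : Finset E) (q : V → ℚ)
    (v₀ : V) (d : V → ℤ)
    (h : Quasistable ends S q v₀ d) :
    ConnF ends (Finset.univ \ S) := by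
  classical
  refine connF_of_forall_reaches (v₀ := v₀) fun x => ?_
  by_contra hx
  refine h.false_of_boundary_subset (W := {w | Reaches ends (Finset.univ \ S) v₀ w}) ?_ ?_ ?_
  · exact fun hW => hx (Finset.mem_filter.mp (hW ▸ Finset.mem_univ x)).2
  · exact Finset.mem_filter.mpr ⟨Finset.mem_univ _, .refl⟩
  · intro e he
    simpa using notMem_of_boundary_reachableSet he

/-- if there exists a v₀-quasistable 0-cochain on Γ∖S then Γ∖S is connected. -/
theorem stmt7 [Fintype V] [Fintype E] [DecidableEq V] [DecidableEq E] (ends : E → V × V) (S : Finset E) (q : V → ℚ) (qz : ℤ)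
    (hq : ∑ v, q v = (qz : ℚ)) (v₀ : V) (d : V → ℤ)
    (h : Quasistable ends S q v₀ d) :
    ConnF ends (Finset.univ \ S) :=
  stmt7_general ends S q v₀ d h
end

section
/- Let Γ be a finite graph with Γ∖S connected, v₀ ∈ V(Γ), S ⊆ E(Γ), and q ∈ C⁰(Γ,ℚ) with |q| ∈ ℤ. Then every class in C⁰(Γ∖S,ℤ)_{|q|-|S|} / Im(Δ₀) contains a semistable 0-cochain, i.e. the map from the set B_{Γ∖S}(q) of semistable 0-cochains to the quotient is surjective. -/
open Finset

variable {V E : Type}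

/- ======================= auxiliary machinery ======================= -/

section AuxMachinery
set_option linter.unusedSectionVars false
set_option linter.unusedVariables false

/-- Dirichlet bilinear form on the edge set `F`. -/
def Bf [DecidableEq E] (ends : E → V × V) (F : Finset E) (f g : V → ℤ) : ℤ :=
  ∑ e ∈ F, (f (ends e).1 - f (ends e).2) * (g (ends e).1 - g (ends e).2)

/-- Number of half-edges of `S` at `v`. -/
def sigmaV [DecidableEq V] [DecidableEq E] (ends : E → V × V) (S : Finset E) (v : V) : ℕ :=
  (S.filter fun e => (ends e).1 = v).card + (S.filter fun e => (ends e).2 = v).card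

variable [Fintype V] [Fintype E] [DecidableEq V] [DecidableEq E]

lemma chi_compl (W : Finset V) (v : V) : chi Wᶜ v = 1 - chi W v := by
  by_cases h : v ∈ W <;> simp [chi, h]

lemma Bf_nonneg (ends : E → V × V) (F : Finset E) (t : V → ℤ) : 0 ≤ Bf ends F t t :=
  Finset.sum_nonneg fun e _ => mul_self_nonneg _

lemma Bf_chi_compl (ends : E → V × V) (F : Finset E) (t : V → ℤ) (W : Finset V) :
    Bf ends F t (chi Wᶜ) = - Bf ends F t (chi W) := by
  rw [Bf, Bf, ← Finset.sum_neg_distrib]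
  exact Finset.sum_congr rfl fun e _ => by rw [chi_compl, chi_compl]; ring

lemma Bf_chi_chi_compl (ends : E → V × V) (F : Finset E) (W : Finset V) :
    Bf ends F (chi Wᶜ) (chi Wᶜ) = Bf ends F (chi W) (chi W) :=
  Finset.sum_congr rfl fun e _ => by rw [chi_compl, chi_compl]; ring

lemma Bf_chi_eq_valS (ends : E → V × V) (F : Finset E) (W : Finset V) :
    Bf ends F (chi W) (chi W) = (valS ends F W Wᶜ : ℤ) := by
  rw [Bf, valS, Finset.card_filter]
  push_cast
  refine Finset.sum_congr rfl fun e _ => ?_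
  by_cases h1 : (ends e).1 ∈ W <;> by_cases h2 : (ends e).2 ∈ W <;>
    simp [chi, h1, h2]

lemma valAB_split (ends : E → V × V) (S : Finset E) (A B : Finset V) :
    valAB ends A B = valS ends (Finset.univ \ S) A B + valS ends S A B := by
  rw [valAB, valS, valS, valS, ← Finset.card_union_of_disjoint, ← Finset.filter_union]
  · congr 1
    ext e
    by_cases h : e ∈ S <;> simp [h]
  · exact Finset.disjoint_filter_filter (Finset.sdiff_disjoint)

lemma sigma_sum (ends : E → V × V) (S : Finset E) (W : Finset V) :
    ∑ v ∈ W, sigmaV ends S v = 2 * insideE ends W S + valS ends S W Wᶜ := by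
  have key : ∑ v ∈ W, sigmaV ends S v
      = ∑ e ∈ S, ((if (ends e).1 ∈ W then 1 else 0) + if (ends e).2 ∈ W then 1 else 0) := by
    simp only [sigmaV, Finset.card_filter, ← Finset.sum_add_distrib]
    rw [Finset.sum_comm]
    refine Finset.sum_congr rfl fun e _ => ?_
    rw [Finset.sum_add_distrib, Finset.sum_ite_eq W ((ends e).1) (fun _ => (1:ℕ)),
      Finset.sum_ite_eq W ((ends e).2) (fun _ => (1:ℕ))]
  rw [key, insideE, valS, Finset.card_filter, Finset.card_filter, Finset.mul_sum,
    ← Finset.sum_add_distrib]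
  refine Finset.sum_congr rfl fun e _ => ?_
  by_cases h1 : (ends e).1 ∈ W <;> by_cases h2 : (ends e).2 ∈ W <;> simp [h1, h2]

lemma sigma_univ (ends : E → V × V) (S : Finset E) :
    ∑ v, sigmaV ends S v = 2 * S.card := by
  rw [sigma_sum]
  have h1 : insideE ends Finset.univ S = S.card := by
    simp [insideE]
  have h2 : valS ends S Finset.univ (Finset.univ : Finset V)ᶜ = 0 := by
    simp [valS]
  omega

lemma innerSumL (x y v : V) (t : V → ℤ) :
    ∑ w ∈ Finset.univ.erase v, t w * (if ((x = v ∧ y = w) ∨ (x = w ∧ y = v)) then 1 else 0)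
    = (if x = v ∧ ¬ y = v then t y else 0) + (if y = v ∧ ¬ x = v then t x else 0) := by
  have hsplit : ∀ w ∈ Finset.univ.erase v,
      t w * (if ((x = v ∧ y = w) ∨ (x = w ∧ y = v)) then 1 else 0)
      = (if w = y then (if x = v ∧ ¬ y = v then t w else 0) else 0)
      + (if w = x then (if y = v ∧ ¬ x = v then t w else 0) else 0) := by
    intro w hw
    have hwv : ¬ w = v := (Finset.mem_erase.mp hw).1
    by_cases hx : x = v <;> by_cases hy : y = v <;> by_cases hwx : w = x <;>
      by_cases hwy : w = y <;> simp_all <;> (intro h; cases h; simp_all)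
  rw [Finset.sum_congr rfl hsplit, Finset.sum_add_distrib,
    Finset.sum_ite_eq' (Finset.univ.erase v) y _,
    Finset.sum_ite_eq' (Finset.univ.erase v) x _]
  by_cases hx : x = v <;> by_cases hy : y = v <;> simp_all

lemma lap_eq_sum (ends : E → V × V) (F : Finset E) (t : V → ℤ) (v : V) :
    lapF ends F t v = ∑ e ∈ F,
      (-t v * (if ((ends e).1 = v ∧ ¬ (ends e).2 = v) ∨ (¬ (ends e).1 = v ∧ (ends e).2 = v) then 1 else 0)
       + ((if (ends e).1 = v ∧ ¬ (ends e).2 = v then t (ends e).2 else 0)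
          + (if (ends e).2 = v ∧ ¬ (ends e).1 = v then t (ends e).1 else 0))) := by
  rw [lapF, Finset.sum_add_distrib]
  congr 1
  · rw [valS, Finset.card_filter]
    push_cast
    rw [Finset.mul_sum]
    refine Finset.sum_congr rfl fun e _ => ?_
    congr 1
    simp [Finset.mem_compl]
  · have hval : ∀ w, (valS ends F {v} {w} : ℤ)
        = ∑ e ∈ F, (if (((ends e).1 = v ∧ (ends e).2 = w) ∨ ((ends e).1 = w ∧ (ends e).2 = v)) then 1 else 0) := by
      intro w
      rw [valS, Finset.card_filter]
      push_cast
      refine Finset.sum_congr rfl fun e _ => ?_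
      congr 1
      simp
    calc ∑ w ∈ Finset.univ.erase v, t w * (valS ends F {v} {w} : ℤ)
        = ∑ w ∈ Finset.univ.erase v, ∑ e ∈ F, t w *
            (if (((ends e).1 = v ∧ (ends e).2 = w) ∨ ((ends e).1 = w ∧ (ends e).2 = v)) then 1 else 0) := by
          refine Finset.sum_congr rfl fun w _ => ?_
          rw [hval, Finset.mul_sum]
      _ = ∑ e ∈ F, ∑ w ∈ Finset.univ.erase v, t w *
            (if (((ends e).1 = v ∧ (ends e).2 = w) ∨ ((ends e).1 = w ∧ (ends e).2 = v)) then 1 else 0) :=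
          Finset.sum_comm
      _ = _ := Finset.sum_congr rfl fun e _ => innerSumL (ends e).1 (ends e).2 v t

lemma edge_sum (x y : V) (t : V → ℤ) (W : Finset V) :
    ∑ v ∈ W, (-t v * (if (x = v ∧ ¬ y = v) ∨ (¬ x = v ∧ y = v) then 1 else 0)
       + ((if x = v ∧ ¬ y = v then t y else 0) + (if y = v ∧ ¬ x = v then t x else 0)))
    = -((t x - t y) * (chi W x - chi W y)) := by
  by_cases hxy : x = y
  · subst hxy
    simp
  · have hsum : ∀ v ∈ W, (-t v * (if (x = v ∧ ¬ y = v) ∨ (¬ x = v ∧ y = v) then 1 else 0)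
       + ((if x = v ∧ ¬ y = v then t y else 0) + (if y = v ∧ ¬ x = v then t x else 0)))
        = (if v = x then t y - t x else 0) + (if v = y then t x - t y else 0) := by
      intro v _
      by_cases hvx : v = x
      · subst hvx
        have h1 : ¬ y = v := fun h => hxy h.symm
        simp [h1, hxy]
        ring
      · by_cases hvy : v = y
        · subst hvy
          have h1 : ¬ x = v := fun h => hvx h.symm
          simp [h1, hvx]
          ring
        · have h1 : ¬ x = v := fun h => hvx h.symm
          have h2 : ¬ y = v := fun h => hvy h.symm
          simp [h1, h2, hvx, hvy]
    rw [Finset.sum_congr rfl hsum, Finset.sum_add_distrib,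
      Finset.sum_ite_eq' W x _, Finset.sum_ite_eq' W y _]
    by_cases hx : x ∈ W <;> by_cases hy : y ∈ W <;> simp [chi, hx, hy] <;> ring

/-- Key identity: the sum of the Laplacian over `W` equals minus the Dirichlet
pairing with the characteristic function of `W`. -/
lemma lap_sum (ends : E → V × V) (F : Finset E) (t : V → ℤ) (W : Finset V) :
    ∑ v ∈ W, lapF ends F t v = - Bf ends F t (chi W) := by
  calc ∑ v ∈ W, lapF ends F t v
      = ∑ v ∈ W, ∑ e ∈ F,
        (-t v * (if ((ends e).1 = v ∧ ¬ (ends e).2 = v) ∨ (¬ (ends e).1 = v ∧ (ends e).2 = v) then 1 else 0)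
         + ((if (ends e).1 = v ∧ ¬ (ends e).2 = v then t (ends e).2 else 0)
            + (if (ends e).2 = v ∧ ¬ (ends e).1 = v then t (ends e).1 else 0))) :=
        Finset.sum_congr rfl fun v _ => lap_eq_sum ends F t v
    _ = ∑ e ∈ F, ∑ v ∈ W,
        (-t v * (if ((ends e).1 = v ∧ ¬ (ends e).2 = v) ∨ (¬ (ends e).1 = v ∧ (ends e).2 = v) then 1 else 0)
         + ((if (ends e).1 = v ∧ ¬ (ends e).2 = v then t (ends e).2 else 0)
            + (if (ends e).2 = v ∧ ¬ (ends e).1 = v then t (ends e).1 else 0))) := Finset.sum_comm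
    _ = ∑ e ∈ F, -((t (ends e).1 - t (ends e).2) * (chi W (ends e).1 - chi W (ends e).2)) :=
        Finset.sum_congr rfl fun e _ => edge_sum (ends e).1 (ends e).2 t W
    _ = - Bf ends F t (chi W) := by rw [Bf, ← Finset.sum_neg_distrib]

/-- Maximal edge increment of an integer cochain. -/
def Mt (ends : E → V × V) (F : Finset E) (t : V → ℤ) : ℕ :=
  F.sup fun e => (t (ends e).1 - t (ends e).2).natAbs

lemma Mt_sq_le (ends : E → V × V) (F : Finset E) (t : V → ℤ) :
    ((Mt ends F t : ℤ))^2 ≤ Bf ends F t t := by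
  rcases F.eq_empty_or_nonempty with h | h
  · simp [Mt, h, Bf]
  · obtain ⟨e, he, hsup⟩ := Finset.exists_mem_eq_sup F h
      (fun e => (t (ends e).1 - t (ends e).2).natAbs)
    rw [Mt, hsup]
    have h1 : ((t (ends e).1 - t (ends e).2).natAbs : ℤ)^2
        = (t (ends e).1 - t (ends e).2) * (t (ends e).1 - t (ends e).2) := by
      rw [Int.natAbs_sq]; ring
    rw [h1]
    exact Finset.single_le_sum (f := fun e => (t (ends e).1 - t (ends e).2) * (t (ends e).1 - t (ends e).2))
      (fun e _ => mul_self_nonneg _) he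

/-- the auxiliary simple graph -/
def Gr (ends : E → V × V) (F : Finset E) : SimpleGraph V :=
  SimpleGraph.fromRel (fun a b => ∃ e ∈ F, ends e = (a, b) ∨ ends e = (b, a))

lemma adj_step (ends : E → V × V) (F : Finset E) (t : V → ℤ) {u w : V}
    (h : (Gr ends F).Adj u w) : (t u - t w).natAbs ≤ Mt ends F t := by
  rw [Gr, SimpleGraph.fromRel_adj] at h
  obtain ⟨-, h | h⟩ := h <;> obtain ⟨e, he, h | h⟩ := h <;>
  · have h2 := Finset.le_sup (f := fun e => (t (ends e).1 - t (ends e).2).natAbs) he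
    simp only [h] at h2
    have hcomm : ∀ a b : ℤ, (a - b).natAbs = (b - a).natAbs := fun a b => by
      rw [← Int.natAbs_neg, neg_sub]
    rw [Mt]
    first
    | exact h2
    | (rw [hcomm]; exact h2)

lemma reach_Gr (ends : E → V × V) (F : Finset E) {u w : V} (h : Reaches ends F u w) :
    (Gr ends F).Reachable u w := by
  induction h with
  | refl => exact SimpleGraph.Reachable.refl u
  | tail _ hstep ih =>
    rename_i b c _
    by_cases hbc : b = c
    · exact hbc ▸ ih
    · exact ih.trans (SimpleGraph.Adj.reachable (by
        rw [Gr, SimpleGraph.fromRel_adj]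
        exact ⟨hbc, Or.inl hstep⟩))

lemma walk_bound (ends : E → V × V) (F : Finset E) (t : V → ℤ) {u w : V}
    (p : (Gr ends F).Walk u w) : (t u - t w).natAbs ≤ p.length * Mt ends F t := by
  induction p with
  | nil => simp
  | @cons a b c h p ih =>
    have h1 : (t a - t c).natAbs ≤ (t a - t b).natAbs + (t b - t c).natAbs := by
      have : t a - t c = (t a - t b) + (t b - t c) := by ring
      rw [this]; exact Int.natAbs_add_le _ _
    calc (t a - t c).natAbs ≤ (t a - t b).natAbs + (t b - t c).natAbs := h1
      _ ≤ Mt ends F t + p.length * Mt ends F t :=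
          Nat.add_le_add (adj_step ends F t h) ih
      _ = (p.length + 1) * Mt ends F t := by ring
      _ = (SimpleGraph.Walk.cons h p).length * Mt ends F t := by
          rw [SimpleGraph.Walk.length_cons]

lemma t_bound (ends : E → V × V) (F : Finset E) (hconn : ConnF ends F) (t : V → ℤ)
    (v₀ : V) (ht : t v₀ = 0) (v : V) :
    (t v).natAbs ≤ Fintype.card V * Mt ends F t := by
  obtain ⟨p⟩ := reach_Gr ends F (hconn v v₀)
  have hp := (p.toPath.2).length_lt
  calc (t v).natAbs = (t v - t v₀).natAbs := by rw [ht, sub_zero]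
    _ ≤ (p.toPath.1).length * Mt ends F t := walk_bound ends F t p.toPath.1
    _ ≤ Fintype.card V * Mt ends F t := Nat.mul_le_mul_right _ (le_of_lt hp)

/-- The energy of an integer cochain. -/
def EnQ (ends : E → V × V) (F : Finset E) (β : V → ℚ) (t : V → ℤ) : ℚ :=
  -(Bf ends F t t : ℚ) + 2 * ∑ v, β v * (t v : ℚ)

def betaQ (ends : E → V × V) (S : Finset E) (q : V → ℚ) (d0 : V → ℤ) (v : V) : ℚ :=
  (d0 v : ℚ) - q v + (sigmaV ends S v : ℚ)/2

def NQ (q : V → ℚ) : ℕ := ∏ v, (q v).den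

lemma q_mul_N_int (q : V → ℚ) (v : V) : ∃ m : ℤ, (q v) * (NQ q : ℚ) = m := by
  refine ⟨(q v).num * (∏ w ∈ Finset.univ.erase v, ((q w).den : ℤ)), ?_⟩
  have h1 : (NQ q : ℚ) = ((q v).den : ℚ) * ∏ w ∈ Finset.univ.erase v, ((q w).den : ℚ) := by
    rw [NQ]
    push_cast
    rw [← Finset.mul_prod_erase Finset.univ (fun w => ((q w).den : ℚ)) (Finset.mem_univ v)]
  rw [h1, ← mul_assoc, Rat.mul_den_eq_num]
  push_cast
  ring

lemma EnQ_int (ends : E → V × V) (F : Finset E) (S : Finset E) (q : V → ℚ) (d0 : V → ℤ)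
    (t : V → ℤ) : ∃ m : ℤ, (m : ℚ) = 2 * (NQ q) * EnQ ends F (betaQ ends S q d0) t := by
  choose p hp using q_mul_N_int q
  refine ⟨-2*(NQ q)*Bf ends F t t
    + ∑ v, (2*(NQ q)*(d0 v) - 2*(p v) + (NQ q)*(sigmaV ends S v)) * (2 * t v), ?_⟩
  have key : ∀ v ∈ Finset.univ, (((2*(NQ q : ℤ)*(d0 v) - 2*(p v) + (NQ q : ℤ)*(sigmaV ends S v)) * (2 * t v) : ℤ) : ℚ)
      = 2*(NQ q : ℚ)*(2*(betaQ ends S q d0 v * (t v : ℚ))) := by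
    intro v _
    rw [betaQ]
    push_cast
    linear_combination (4*(t v : ℚ)) * (hp v)
  calc ((-2*(NQ q : ℤ)*Bf ends F t t
      + ∑ v, (2*(NQ q : ℤ)*(d0 v) - 2*(p v) + (NQ q : ℤ)*(sigmaV ends S v)) * (2 * t v) : ℤ) : ℚ)
      = -2*(NQ q : ℚ)*(Bf ends F t t : ℚ)
        + ∑ v, (((2*(NQ q : ℤ)*(d0 v) - 2*(p v) + (NQ q : ℤ)*(sigmaV ends S v)) * (2 * t v) : ℤ) : ℚ) := by
        push_cast; ring
    _ = -2*(NQ q : ℚ)*(Bf ends F t t : ℚ) + ∑ v, 2*(NQ q : ℚ)*(2*(betaQ ends S q d0 v * (t v : ℚ))) := by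
        rw [Finset.sum_congr rfl key]
    _ = 2 * (NQ q : ℚ) * EnQ ends F (betaQ ends S q d0) t := by
        rw [EnQ, ← Finset.mul_sum]
        have h2 : ∑ v, 2*(betaQ ends S q d0 v * (t v : ℚ)) = 2 * ∑ v, betaQ ends S q d0 v * (t v : ℚ) := by
          rw [Finset.mul_sum]
        rw [h2]
        ring

lemma Emove (ends : E → V × V) (F : Finset E) (β : V → ℚ) (t : V → ℤ) (W : Finset V)
    (ε : ℤ) (hε : ε^2 = 1) :
    EnQ ends F β (fun v => t v + ε * chi W v)
    = EnQ ends F β t - 2*(ε:ℚ)*(Bf ends F t (chi W) : ℚ)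
      - (Bf ends F (chi W) (chi W) : ℚ) + 2*(ε:ℚ) * ∑ v ∈ W, β v := by
  have hB : Bf ends F (fun v => t v + ε * chi W v) (fun v => t v + ε * chi W v)
      = Bf ends F t t + 2*ε*Bf ends F t (chi W) + ε^2 * Bf ends F (chi W) (chi W) := by
    simp only [Bf, Finset.mul_sum, ← Finset.sum_add_distrib]
    exact Finset.sum_congr rfl fun e _ => by ring
  have hS : ∑ v, β v * ((t v + ε * chi W v : ℤ) : ℚ)
      = ∑ v, β v * (t v : ℚ) + (ε:ℚ) * ∑ v ∈ W, β v := by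
    have h1 : ∀ v ∈ Finset.univ, β v * ((t v + ε * chi W v : ℤ) : ℚ)
        = β v * (t v : ℚ) + (ε:ℚ) * (if v ∈ W then β v else 0) := by
      intro v _
      by_cases h : v ∈ W
      · simp only [chi, if_pos h, if_pos h]
        push_cast
        ring
      · simp [chi, h]
    rw [Finset.sum_congr rfl h1, Finset.sum_add_distrib, ← Finset.mul_sum,
      Finset.sum_ite_mem, Finset.univ_inter]
  rw [EnQ, EnQ, hB, hε]
  beta_reduce
  rw [hS]
  push_cast
  ring

lemma EnQ_bdd (ends : E → V × V) (F : Finset E) (hconn : ConnF ends F) (β : V → ℚ)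
    (v₀ : V) (t : V → ℤ) (ht : t v₀ = 0) :
    EnQ ends F β t ≤ ((∑ v, |β v|) * (Fintype.card V))^2 := by
  set M : ℕ := Mt ends F t with hM
  set C : ℚ := ∑ v, |β v| with hC
  set n : ℕ := Fintype.card V with hn
  have hC0 : 0 ≤ C := Finset.sum_nonneg fun v _ => abs_nonneg _
  have h1 : ((M : ℚ))^2 ≤ (Bf ends F t t : ℚ) := by
    exact_mod_cast Mt_sq_le ends F t
  have h2 : ∀ v, |(t v : ℚ)| ≤ (n : ℚ) * M := by
    intro v
    have := t_bound ends F hconn t v₀ ht v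
    have hcast : ((t v).natAbs : ℚ) ≤ ((n * M : ℕ) : ℚ) := by exact_mod_cast this
    rw [Nat.cast_natAbs] at hcast
    push_cast at hcast ⊢
    exact hcast
  have h3 : ∑ v, β v * (t v : ℚ) ≤ C * ((n:ℚ) * M) := by
    rw [hC, Finset.sum_mul]
    refine Finset.sum_le_sum fun v _ => ?_
    calc β v * (t v : ℚ) ≤ |β v * (t v : ℚ)| := le_abs_self _
      _ = |β v| * |(t v : ℚ)| := abs_mul _ _
      _ ≤ |β v| * ((n:ℚ) * M) := mul_le_mul_of_nonneg_left (h2 v) (abs_nonneg _)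
  have hM0 : (0:ℚ) ≤ (M:ℚ) := Nat.cast_nonneg _
  have hn0 : (0:ℚ) ≤ (n:ℚ) := Nat.cast_nonneg _
  rw [EnQ]
  nlinarith [sq_nonneg ((M:ℚ) - C * n), h1, h3, mul_nonneg hC0 hn0]

end AuxMachinery

/-- every class in C⁰(Γ∖S,ℤ)_{|q|-|S|} modulo the image of the
Laplacian of Γ∖S contains a semistable 0-cochain. -/
theorem stmt10 [Fintype V] [Fintype E] [DecidableEq V] [DecidableEq E] (ends : E → V × V) (S : Finset E) (q : V → ℚ) (qz : ℤ)
    (hq : ∑ v, q v = (qz : ℚ)) (v₀ : V)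
    (hconn : ConnF ends (Finset.univ \ S)) (d0 : V → ℤ)
    (h0 : ∑ v, d0 v = qz - S.card) :
    ∃ d : V → ℤ, Semistable ends S q d ∧
      ∃ t : V → ℤ, ∀ v, d v = d0 v + lapF ends (Finset.univ \ S) t v := by
  classical
  set F : Finset E := Finset.univ \ S with hF
  set β : V → ℚ := betaQ ends S q d0 with hβdef
  have hNpos : (0:ℚ) < 2 * (NQ q : ℚ) := by
    have : 0 < NQ q := Finset.prod_pos fun v _ => (q v).pos
    positivity
  -- maximizer of the energy
  obtain ⟨mx, ⟨t, ht0, hmxEq⟩, hmax⟩ := Int.exists_greatest_of_bdd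
    (P := fun m : ℤ => ∃ t : V → ℤ, t v₀ = 0 ∧ (m : ℚ) = 2 * (NQ q) * EnQ ends F β t)
    (by
      refine ⟨⌈2 * (NQ q : ℚ) * (((∑ v, |β v|) * (Fintype.card V))^2)⌉, ?_⟩
      rintro z ⟨t, ht, hz⟩
      have hb := EnQ_bdd ends F hconn β v₀ t ht
      have h2 : (z : ℚ) ≤ 2 * (NQ q : ℚ) * (((∑ v, |β v|) * (Fintype.card V))^2) := by
        rw [hz]
        exact mul_le_mul_of_nonneg_left hb (le_of_lt hNpos)
      calc z = ⌈(z:ℚ)⌉ := by rw [Int.ceil_intCast]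
        _ ≤ _ := Int.ceil_le_ceil h2)
    (by
      refine ⟨0, fun _ => 0, rfl, ?_⟩
      simp [EnQ, Bf])
  have key : ∀ t' : V → ℤ, t' v₀ = 0 → EnQ ends F β t' ≤ EnQ ends F β t := by
    intro t' h'
    obtain ⟨m', hm'⟩ := EnQ_int ends F S q d0 t'
    have hle : m' ≤ mx := hmax m' ⟨t', h', hm'⟩
    have hle2 : (m' : ℚ) ≤ (mx : ℚ) := by exact_mod_cast hle
    rw [hm', hmxEq] at hle2
    exact le_of_mul_le_mul_left hle2 hNpos
  -- the semistable representative
  refine ⟨fun v => d0 v + lapF ends F t v, ⟨?_, ?_⟩, t, fun v => rfl⟩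
  · -- total degree
    have hlap0 : ∑ v, lapF ends F t v = 0 := by
      rw [lap_sum]
      have : Bf ends F t (chi Finset.univ) = 0 := by
        simp [Bf, chi]
      rw [this, neg_zero]
    have hdeg : ∑ v, (d0 v + lapF ends F t v) = qz - S.card := by
      rw [Finset.sum_add_distrib, hlap0, h0, add_zero]
    rw [hdeg]
    push_cast
    rw [hq]
  · -- semistability inequalities
    intro W hW
    -- the common key inequality
    have hkey : (Bf ends F t (chi W) : ℚ)
        ≤ (Bf ends F (chi W) (chi W) : ℚ)/2 + ∑ v ∈ W, β v := by
      by_cases hv₀ : v₀ ∈ W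
      · -- fire the complement into W
        have hA0 : chi Wᶜ v₀ = 0 := by simp [chi, hv₀]
        have hE := key (fun v => t v + (1:ℤ) * chi Wᶜ v) (by simp [ht0, hA0])
        rw [Emove ends F β t Wᶜ 1 (by norm_num)] at hE
        have hstep : 2 * ∑ v ∈ Wᶜ, β v
            ≤ 2 * (Bf ends F t (chi Wᶜ) : ℚ) + (Bf ends F (chi Wᶜ) (chi Wᶜ) : ℚ) := by
          push_cast at hE
          linarith
        rw [Bf_chi_compl, Bf_chi_chi_compl] at hstep
        have hβtot : ∑ v, β v = 0 := by
          rw [hβdef]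
          have hs : ∑ v, betaQ ends S q d0 v
              = ((∑ v, d0 v : ℤ) : ℚ) - (∑ v, q v) + ((∑ v, sigmaV ends S v : ℕ) : ℚ)/2 := by
            simp only [betaQ]
            rw [Finset.sum_add_distrib, Finset.sum_sub_distrib, ← Finset.sum_div]
            push_cast
            ring
          rw [hs, h0, hq, sigma_univ]
          push_cast
          ring
        have hcompl : ∑ v ∈ Wᶜ, β v = - ∑ v ∈ W, β v := by
          have := Finset.sum_add_sum_compl W β
          linarith
        rw [hcompl] at hstep
        push_cast at hstep ⊢
        linarith
      · -- fire W outwards (with ε = -1)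
        have hA0 : chi W v₀ = 0 := by simp [chi, hv₀]
        have hE := key (fun v => t v + (-1:ℤ) * chi W v) (by simp [ht0, hA0])
        rw [Emove ends F β t W (-1) (by norm_num)] at hE
        push_cast at hE ⊢
        linarith
    -- translate to the required inequality
    have hlapW : ((∑ v ∈ W, lapF ends F t v : ℤ) : ℚ) = -(Bf ends F t (chi W) : ℚ) := by
      rw [lap_sum]
      push_cast
      ring
    have hβW : ∑ v ∈ W, β v
        = (∑ v ∈ W, (d0 v : ℚ)) - (∑ v ∈ W, q v) + ((∑ v ∈ W, sigmaV ends S v : ℕ) : ℚ)/2 := by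
      rw [hβdef]
      simp only [betaQ]
      rw [Finset.sum_add_distrib, Finset.sum_sub_distrib, ← Finset.sum_div]
      push_cast
      ring
    have hσW : ((∑ v ∈ W, sigmaV ends S v : ℕ) : ℚ)
        = 2 * (insideE ends W S : ℚ) + (valS ends S W Wᶜ : ℚ) := by
      rw [sigma_sum]
      push_cast
      ring
    have hBχ : (Bf ends F (chi W) (chi W) : ℚ) = (valS ends F W Wᶜ : ℚ) := by
      rw [Bf_chi_eq_valS]
      push_cast
      ring
    have hvalAB : (valAB ends W Wᶜ : ℚ) = (valS ends F W Wᶜ : ℚ) + (valS ends S W Wᶜ : ℚ) := by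
      rw [hF, valAB_split ends S]
      push_cast
      ring
    have hdW : ∑ w ∈ W, (((fun v => d0 v + lapF ends F t v) w : ℤ) : ℚ)
        = (∑ w ∈ W, (d0 w : ℚ)) + ((∑ v ∈ W, lapF ends F t v : ℤ) : ℚ) := by
      push_cast
      rw [Finset.sum_add_distrib]
    rw [ge_iff_le]
    rw [hdW, hlapW]
    linarith [hkey, hβW, hσW, hBχ, hvalAB]
end

section
/- Let Γ be a finite graph with Γ∖S connected, v₀ ∈ V(Γ), S ⊆ E(Γ), and q ∈ C⁰(Γ,ℚ) with |q| ∈ ℤ. Then the natural map π : B^{v₀}_{Γ∖S}(q) → C⁰(Γ∖S,ℤ)_{|q|-|S|} / Im(Δ₀) is a bijection: each residue class modulo the image of the Laplacian of Γ∖S contains exactly one v₀-quasistable 0-cochain. -/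
open Finset

variable {V E : Type}

set_option linter.unusedSectionVars false
namespace Stmt11Aux

variable [Fintype V] [Fintype E] [DecidableEq V] [DecidableEq E]

/-- S-degree of a vertex (loops counted twice). -/
def sdeg (ends : E → V × V) (S : Finset E) (v : V) : ℕ :=
  ∑ e ∈ S, ((if (ends e).1 = v then 1 else 0) + (if (ends e).2 = v then 1 else 0))

lemma lap_eq (ends : E → V × V) (F : Finset E) (t : V → ℤ) (v : V) :
    lapF ends F t v = ∑ e ∈ F,
      ((if (ends e).1 = v then t (ends e).2 - t (ends e).1 else 0)
      + (if (ends e).2 = v then t (ends e).1 - t (ends e).2 else 0)) := by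
  unfold lapF valS
  simp only [Finset.card_filter, Nat.cast_sum, Finset.mul_sum, Finset.mem_singleton,
    Finset.mem_compl]
  rw [Finset.sum_comm, ← Finset.sum_add_distrib]
  refine Finset.sum_congr rfl fun e _ => ?_
  by_cases ha : (ends e).1 = v <;> by_cases hb : (ends e).2 = v <;>
    simp [ha, hb, mul_ite, Finset.sum_ite_eq, Finset.mem_erase, eq_comm] <;> ring

lemma lap_sum (ends : E → V × V) (F : Finset E) (t : V → ℤ) (W : Finset V) :
    ∑ v ∈ W, lapF ends F t v = ∑ e ∈ F,
      ((if (ends e).1 ∈ W then t (ends e).2 - t (ends e).1 else 0)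
      + (if (ends e).2 ∈ W then t (ends e).1 - t (ends e).2 else 0)) := by
  simp_rw [lap_eq]
  rw [Finset.sum_comm]
  refine Finset.sum_congr rfl fun e _ => ?_
  rw [Finset.sum_add_distrib]
  congr 1 <;> simp [Finset.sum_ite_eq']

lemma lap_total (ends : E → V × V) (F : Finset E) (t : V → ℤ) :
    ∑ v, lapF ends F t v = 0 := by
  rw [lap_sum]
  exact Finset.sum_eq_zero fun e _ => by simp

lemma lap_const (ends : E → V × V) (F : Finset E) (c : ℤ) (v : V) :
    lapF ends F (fun _ => c) v = 0 := by
  rw [lap_eq]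
  exact Finset.sum_eq_zero fun e _ => by split_ifs <;> ring

lemma lap_sub (ends : E → V × V) (F : Finset E) (s t : V → ℤ) (v : V) :
    lapF ends F (fun w => s w - t w) v = lapF ends F s v - lapF ends F t v := by
  simp_rw [lap_eq, ← Finset.sum_sub_distrib]
  exact Finset.sum_congr rfl fun e _ => by split_ifs <;> ring

lemma sum_sdeg (ends : E → V × V) (S : Finset E) (W : Finset V) :
    ∑ v ∈ W, sdeg ends S v = 2 * insideE ends W S + valS ends S W Wᶜ := by
  unfold sdeg insideE valS
  rw [Finset.sum_comm, Finset.card_filter, Finset.card_filter, Finset.mul_sum,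
    ← Finset.sum_add_distrib]
  refine Finset.sum_congr rfl fun e _ => ?_
  rw [Finset.sum_add_distrib]
  by_cases ha : (ends e).1 ∈ W <;> by_cases hb : (ends e).2 ∈ W <;>
    simp [ha, hb, Finset.sum_ite_eq', Finset.mem_compl]

lemma sum_sdeg_univ (ends : E → V × V) (S : Finset E) :
    ∑ v, sdeg ends S v = 2 * S.card := by
  unfold sdeg
  rw [Finset.sum_comm]
  rw [Finset.sum_congr rfl (fun e _ => ?_), Finset.sum_const, smul_eq_mul, mul_comm]
  rw [Finset.sum_add_distrib]
  simp [Finset.sum_ite_eq']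

lemma valS_symm (ends : E → V × V) (F : Finset E) (A B : Finset V) :
    valS ends F A B = valS ends F B A := by
  unfold valS
  congr 1
  exact Finset.filter_congr fun e _ => by tauto

lemma valAB_split (ends : E → V × V) (S : Finset E) (W : Finset V) :
    valAB ends W Wᶜ = valS ends (Finset.univ \ S) W Wᶜ + valS ends S W Wᶜ := by
  unfold valAB valS
  rw [← Finset.card_union_of_disjoint (Finset.disjoint_filter_filter Finset.sdiff_disjoint),
    ← Finset.filter_union, Finset.sdiff_union_of_subset (Finset.subset_univ S)]

lemma inside_compl (ends : E → V × V) (S : Finset E) (W : Finset V) :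
    insideE ends W S + insideE ends Wᶜ S + valS ends S W Wᶜ = S.card := by
  unfold insideE valS
  rw [Finset.card_filter, Finset.card_filter, Finset.card_filter,
    ← Finset.sum_add_distrib, ← Finset.sum_add_distrib]
  have : ∀ e ∈ S, ((if (ends e).1 ∈ W ∧ (ends e).2 ∈ W then 1 else 0)
      + (if (ends e).1 ∈ Wᶜ ∧ (ends e).2 ∈ Wᶜ then 1 else 0)
      + if ((ends e).1 ∈ W ∧ (ends e).2 ∈ Wᶜ) ∨ ((ends e).1 ∈ Wᶜ ∧ (ends e).2 ∈ W)
          then 1 else 0) = 1 := by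
    intro e _
    by_cases ha : (ends e).1 ∈ W <;> by_cases hb : (ends e).2 ∈ W <;>
      simp [ha, hb, Finset.mem_compl]
  rw [Finset.sum_congr rfl this]
  simp
lemma exists_cross (ends : E → V × V) {F : Finset E} (hconn : ConnF ends F)
    {W : Finset V} (hne : W.Nonempty) (huniv : W ≠ Finset.univ) :
    ∃ e ∈ F, ((ends e).1 ∈ W ∧ (ends e).2 ∉ W) ∨ ((ends e).1 ∉ W ∧ (ends e).2 ∈ W) := by
  obtain ⟨u, hu⟩ := hne
  obtain ⟨v, hv⟩ : ∃ v, v ∉ W := by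
    by_contra h
    push_neg at h
    exact huniv (Finset.eq_univ_iff_forall.2 h)
  have key : ∀ {x y : V}, Reaches ends F x y → x ∈ W → y ∉ W →
      ∃ e ∈ F, ((ends e).1 ∈ W ∧ (ends e).2 ∉ W) ∨ ((ends e).1 ∉ W ∧ (ends e).2 ∈ W) := by
    intro x y h
    induction h with
    | refl => intro hx hy; exact absurd hx hy
    | @tail b c hxb hbc ih =>
      intro hx hc
      by_cases hb : b ∈ W
      · obtain ⟨e, heF, he⟩ := hbc
        rcases he with h1 | h1
        · exact ⟨e, heF, Or.inl (by rw [h1]; exact ⟨hb, hc⟩)⟩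
        · exact ⟨e, heF, Or.inr (by rw [h1]; exact ⟨hc, hb⟩)⟩
      · exact ih hx hb
  exact key (hconn u v) hu hv

lemma cross_pos (ends : E → V × V) {F : Finset E} (hconn : ConnF ends F)
    {W : Finset V} (hne : W.Nonempty) (huniv : W ≠ Finset.univ) :
    1 ≤ valS ends F W Wᶜ := by
  obtain ⟨e, heF, he⟩ := exists_cross ends hconn hne huniv
  refine Finset.card_pos.2 ⟨e, Finset.mem_filter.2 ⟨heF, ?_⟩⟩
  simpa [Finset.mem_compl] using he

/-- Level-clamping bound: if `t v₀ = 0` then every value of `t` is at most the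
total ℓ¹-energy. -/
lemma le_energy (ends : E → V × V) {F : Finset E} (hconn : ConnF ends F) {v₀ : V} :
    ∀ (m : ℕ) (t : V → ℤ), t v₀ = 0 → (∀ v, t v ≤ (m : ℤ)) →
      ∀ v, t v ≤ ∑ e ∈ F, |t (ends e).1 - t (ends e).2| := by
  intro m
  induction m with
  | zero =>
    intro t h0 hb v
    exact le_trans (hb v) (Finset.sum_nonneg fun _ _ => abs_nonneg _)
  | succ m ih =>
    intro t h0 hb v
    by_cases htop : ∀ w, t w ≤ (m : ℤ)
    · exact ih t h0 htop v
    push_neg at htop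
    obtain ⟨w₀, hw₀⟩ := htop
    set W : Finset V := Finset.univ.filter (fun w => (m : ℤ) < t w) with hW
    have hWne : W.Nonempty := ⟨w₀, by simp [hW, hw₀]⟩
    have hWuniv : W ≠ Finset.univ := by
      intro h
      have : v₀ ∈ W := h ▸ Finset.mem_univ v₀
      simp only [hW, Finset.mem_filter] at this
      omega
    obtain ⟨e₀, he₀F, he₀⟩ := exists_cross ends hconn hWne hWuniv
    set t' : V → ℤ := fun w => min (t w) m with ht'
    have h0' : t' v₀ = 0 := by simp [ht', h0]
    have hb' : ∀ w, t' w ≤ (m : ℤ) := fun w => min_le_right _ _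
    have hle : ∀ e ∈ F, |t' (ends e).1 - t' (ends e).2| ≤ |t (ends e).1 - t (ends e).2| := by
      intro e _
      have h1 := le_abs_self (t (ends e).1 - t (ends e).2)
      have h2 := neg_abs_le (t (ends e).1 - t (ends e).2)
      rw [abs_le]
      constructor <;> simp only [ht'] <;> omega
    have hlt : |t' (ends e₀).1 - t' (ends e₀).2| < |t (ends e₀).1 - t (ends e₀).2| := by
      have h1 := le_abs_self (t (ends e₀).1 - t (ends e₀).2)
      have h2 := neg_abs_le (t (ends e₀).1 - t (ends e₀).2)
      have h3 : |t' (ends e₀).1 - t' (ends e₀).2| ≤ |t' (ends e₀).1 - t' (ends e₀).2| :=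
        le_refl _
      rcases he₀ with ⟨ha, hb2⟩ | ⟨ha, hb2⟩ <;>
      · simp only [hW, Finset.mem_filter, Finset.mem_univ, true_and] at ha hb2
        have habs : |t' (ends e₀).1 - t' (ends e₀).2| = |min (t (ends e₀).1) m - min (t (ends e₀).2) m| := rfl
        rw [habs, abs_lt] at *
        constructor <;> omega
    have hA : ∑ e ∈ F, |t' (ends e).1 - t' (ends e).2| + 1 ≤
        ∑ e ∈ F, |t (ends e).1 - t (ends e).2| :=
      Int.add_one_le_iff.2 (Finset.sum_lt_sum hle ⟨e₀, he₀F, hlt⟩)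
    have IH := ih t' h0' hb'
    have hA' : ∑ e ∈ F, |t' (ends e).1 - t' (ends e).2| ≤
        ∑ e ∈ F, |t (ends e).1 - t (ends e).2| - 1 := by omega
    rcases le_or_gt (t v) (m : ℤ) with h | h
    · have : t' v = t v := min_eq_left h
      have := IH v
      omega
    · have h1 : t' v = (m : ℤ) := min_eq_right (by omega)
      have h2 := IH v
      have h3 : t v ≤ (m : ℤ) + 1 := by
        have := hb v
        push_cast at this
        omega
      omega

lemma abs_le_energy (ends : E → V × V) {F : Finset E} (hconn : ConnF ends F) {v₀ : V}
    (t : V → ℤ) (h0 : t v₀ = 0) (v : V) :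
    |t v| ≤ ∑ e ∈ F, |t (ends e).1 - t (ends e).2| := by
  have hup : t v ≤ ∑ e ∈ F, |t (ends e).1 - t (ends e).2| := by
    refine le_energy ends hconn (Finset.univ.sup (fun w => (t w).toNat)) t h0 (fun w => ?_) v
    have h1 : (t w).toNat ≤ Finset.univ.sup (fun w => (t w).toNat) :=
      Finset.le_sup (f := fun w => (t w).toNat) (Finset.mem_univ w)
    omega
  have hdn : -t v ≤ ∑ e ∈ F, |t (ends e).1 - t (ends e).2| := by
    have hbnd : ∀ w, -t w ≤ ((Finset.univ.sup (fun w => (-t w).toNat) : ℕ) : ℤ) := by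
      intro w
      have h1 : (-t w).toNat ≤ Finset.univ.sup (fun w => (-t w).toNat) :=
        Finset.le_sup (f := fun w => (-t w).toNat) (Finset.mem_univ w)
      omega
    have := le_energy ends hconn (v₀ := v₀) (Finset.univ.sup (fun w => (-t w).toNat)) (fun w => -t w)
      (by simp [h0]) hbnd v
    have h1 : ∀ e ∈ F, |-t (ends e).1 - -t (ends e).2| = |t (ends e).1 - t (ends e).2| := by
      intro e _
      rw [← abs_neg]
      congr 1
      ring
    rwa [Finset.sum_congr rfl h1] at this
  rw [abs_le]
  omega
/-- Linear coefficient of the potential. -/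
def cfun (ends : E → V × V) (S : Finset E) (q : V → ℚ) (d0 : V → ℤ) (v : V) : ℚ :=
  q v - (sdeg ends S v : ℚ) / 2 - (d0 v : ℚ)

/-- The potential whose minimizers are quasistable. -/
def PhiF (ends : E → V × V) (S : Finset E) (q : V → ℚ) (d0 : V → ℤ) (t : V → ℤ) : ℚ :=
  (∑ e ∈ Finset.univ \ S, ((t (ends e).1 : ℚ) - (t (ends e).2 : ℚ)) ^ 2) / 2
    + ∑ v, cfun ends S q d0 v * (t v : ℚ)

lemma phi_zero (ends : E → V × V) (S : Finset E) (q : V → ℚ) (d0 : V → ℤ) :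
    PhiF ends S q d0 (fun _ => 0) = 0 := by
  simp [PhiF]

lemma csum_zero (ends : E → V × V) (S : Finset E) (q : V → ℚ) (d0 : V → ℤ) (qz : ℤ)
    (hq : ∑ v, q v = (qz : ℚ)) (h0 : ∑ v, d0 v = qz - S.card) :
    ∑ v, cfun ends S q d0 v = 0 := by
  unfold cfun
  rw [Finset.sum_sub_distrib, Finset.sum_sub_distrib, ← Finset.sum_div, hq]
  have h1 : ((∑ v, sdeg ends S v : ℕ) : ℚ) = 2 * S.card := by
    rw [sum_sdeg_univ]; push_cast; ring
  push_cast at h1 ⊢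
  have h2 : ((∑ v, d0 v : ℤ) : ℚ) = (qz : ℚ) - S.card := by rw [h0]; push_cast; ring
  push_cast at h2
  rw [h1, h2]
  ring

lemma phi_const (ends : E → V × V) (S : Finset E) (q : V → ℚ) (d0 : V → ℤ)
    (hc : ∑ v, cfun ends S q d0 v = 0) (t : V → ℤ) (c : ℤ) :
    PhiF ends S q d0 (fun v => t v + c) = PhiF ends S q d0 t := by
  unfold PhiF
  congr 1
  · congr 1
    refine Finset.sum_congr rfl fun e _ => ?_
    push_cast
    ring
  · have : ∀ v ∈ Finset.univ, cfun ends S q d0 v * ((t v + c : ℤ) : ℚ)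
        = cfun ends S q d0 v * (t v : ℚ) + cfun ends S q d0 v * (c : ℚ) := by
      intro v _
      push_cast
      ring
    rw [Finset.sum_congr rfl this, Finset.sum_add_distrib, ← Finset.sum_mul, hc]
    ring

lemma phi_diff (ends : E → V × V) (S : Finset E) (q : V → ℚ) (d0 : V → ℤ)
    (t : V → ℤ) (W : Finset V) :
    PhiF ends S q d0 (fun v => t v - if v ∈ W then 1 else 0) - PhiF ends S q d0 t
      = (∑ v ∈ W, ((d0 v : ℚ) + (lapF ends (Finset.univ \ S) t v : ℚ)))
        + (valS ends (Finset.univ \ S) W Wᶜ : ℚ) / 2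
        - ∑ v ∈ W, (q v - (sdeg ends S v : ℚ) / 2) := by
  set F := Finset.univ \ S with hF
  have hlap : (∑ v ∈ W, (lapF ends F t v : ℚ))
      = ∑ e ∈ F, ((if (ends e).1 ∈ W then (t (ends e).2 : ℚ) - (t (ends e).1 : ℚ) else 0)
        + (if (ends e).2 ∈ W then (t (ends e).1 : ℚ) - (t (ends e).2 : ℚ) else 0)) := by
    have h := lap_sum ends F t W
    have h2 : ((∑ v ∈ W, lapF ends F t v : ℤ) : ℚ) = _ := congrArg (Int.cast : ℤ → ℚ) h
    push_cast [apply_ite (Int.cast : ℤ → ℚ)] at h2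
    exact h2
  have hval : ((valS ends F W Wᶜ : ℕ) : ℚ)
      = ∑ e ∈ F, ((if (ends e).1 ∈ W then (1:ℚ) else 0)
          - (if (ends e).2 ∈ W then (1:ℚ) else 0)) ^ 2 := by
    unfold valS
    rw [Finset.card_filter]
    push_cast
    refine Finset.sum_congr rfl fun e _ => ?_
    by_cases ha : (ends e).1 ∈ W <;> by_cases hb : (ends e).2 ∈ W <;>
      simp [ha, hb, Finset.mem_compl]
  have hQ : ∑ e ∈ F, (((t (ends e).1 : ℚ) - (if (ends e).1 ∈ W then (1:ℚ) else 0))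
        - ((t (ends e).2 : ℚ) - (if (ends e).2 ∈ W then (1:ℚ) else 0))) ^ 2
      = ∑ e ∈ F, ((t (ends e).1 : ℚ) - (t (ends e).2 : ℚ)) ^ 2
        + 2 * (∑ v ∈ W, (lapF ends F t v : ℚ)) + ((valS ends F W Wᶜ : ℕ) : ℚ) := by
    rw [hlap, hval, Finset.mul_sum, ← Finset.sum_add_distrib, ← Finset.sum_add_distrib]
    refine Finset.sum_congr rfl fun e _ => ?_
    by_cases ha : (ends e).1 ∈ W <;> by_cases hb : (ends e).2 ∈ W <;>
      · push_cast [ha, hb]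
        ring
  have hLin : ∑ v, cfun ends S q d0 v * ((t v - if v ∈ W then 1 else 0 : ℤ) : ℚ)
      = ∑ v, cfun ends S q d0 v * (t v : ℚ) - ∑ v ∈ W, cfun ends S q d0 v := by
    have h1 : ∀ v ∈ Finset.univ, cfun ends S q d0 v * ((t v - if v ∈ W then 1 else 0 : ℤ) : ℚ)
        = cfun ends S q d0 v * (t v : ℚ) - (if v ∈ W then cfun ends S q d0 v else 0) := by
      intro v _
      by_cases hv : v ∈ W <;> push_cast [hv] <;> ring
    rw [Finset.sum_congr rfl h1, Finset.sum_sub_distrib]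
    congr 1
    rw [Finset.sum_ite_mem, Finset.univ_inter]
  unfold PhiF
  rw [← hF, hLin]
  push_cast
  rw [hQ]
  have hcW : ∑ v ∈ W, cfun ends S q d0 v
      = ∑ v ∈ W, (q v - (sdeg ends S v : ℚ) / 2) - ∑ v ∈ W, (d0 v : ℚ) := by
    unfold cfun
    rw [Finset.sum_sub_distrib]
  rw [hcW, Finset.sum_add_distrib]
  ring
/-- A bound for the box in which all relevant potentials live. -/
def Mb (ends : E → V × V) (S : Finset E) (q : V → ℚ) (d0 : V → ℤ) : ℤ :=
  ⌈2 * (∑ v, |cfun ends S q d0 v|) * (((Finset.univ \ S : Finset E)).card : ℚ)⌉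

lemma Mb_nonneg (ends : E → V × V) (S : Finset E) (q : V → ℚ) (d0 : V → ℤ) :
    0 ≤ Mb ends S q d0 := by
  have h : (0:ℚ) ≤ 2 * (∑ v, |cfun ends S q d0 v|) * (((Finset.univ \ S : Finset E)).card : ℚ) := by
    have h1 : (0:ℚ) ≤ ∑ v, |cfun ends S q d0 v| := Finset.sum_nonneg fun _ _ => abs_nonneg _
    positivity
  exact Int.ceil_nonneg h

lemma bound_of_phi (ends : E → V × V) (S : Finset E) (q : V → ℚ) (d0 : V → ℤ) {v₀ : V}
    (hconn : ConnF ends (Finset.univ \ S)) (t : V → ℤ) (h0 : t v₀ = 0)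
    (hphi : PhiF ends S q d0 t ≤ 0) : ∀ v, |t v| ≤ Mb ends S q d0 := by
  intro v
  set F : Finset E := Finset.univ \ S with hF
  set L : ℚ := ∑ v, |cfun ends S q d0 v| with hL
  have hL0 : 0 ≤ L := Finset.sum_nonneg fun _ _ => abs_nonneg _
  set A : ℤ := ∑ e ∈ F, |t (ends e).1 - t (ends e).2| with hA
  have hA0 : 0 ≤ A := Finset.sum_nonneg fun _ _ => abs_nonneg _
  have habs : ∀ w, |t w| ≤ A := fun w => abs_le_energy ends hconn t h0 w
  set Q : ℚ := ∑ e ∈ F, ((t (ends e).1 : ℚ) - (t (ends e).2 : ℚ)) ^ 2 with hQdef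
  have hQ0 : 0 ≤ Q := Finset.sum_nonneg fun _ _ => sq_nonneg _
  have hCS : ((A : ℚ)) ^ 2 ≤ (F.card : ℚ) * Q := by
    have h := Finset.sum_mul_sq_le_sq_mul_sq F (fun _ => (1:ℚ))
      (fun e => |(t (ends e).1 : ℚ) - (t (ends e).2 : ℚ)|)
    simp only [one_mul, one_pow, sq_abs, Finset.sum_const, smul_eq_mul, mul_one,
      nsmul_eq_mul] at h
    have h2 : ((A:ℤ) : ℚ) = ∑ e ∈ F, |(t (ends e).1 : ℚ) - (t (ends e).2 : ℚ)| := by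
      rw [hA]
      push_cast
      rfl
    rw [h2]
    exact h
  have hQL : Q ≤ 2 * L * (A : ℚ) := by
    have h1 : Q / 2 + ∑ w, cfun ends S q d0 w * (t w : ℚ) ≤ 0 := hphi
    have h2 : ∑ w, cfun ends S q d0 w * (t w : ℚ) ≥ -(L * A) := by
      have h3 : ∀ w ∈ Finset.univ, -(|cfun ends S q d0 w| * (A:ℚ))
          ≤ cfun ends S q d0 w * (t w : ℚ) := by
        intro w _
        have h4 : |cfun ends S q d0 w * (t w : ℚ)| ≤ |cfun ends S q d0 w| * (A:ℚ) := by
          rw [abs_mul]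
          refine mul_le_mul_of_nonneg_left ?_ (abs_nonneg _)
          rw [← Int.cast_abs]
          exact_mod_cast habs w
        have := neg_abs_le (cfun ends S q d0 w * (t w : ℚ))
        linarith
      have := Finset.sum_le_sum h3
      rw [Finset.sum_neg_distrib, ← Finset.sum_mul] at this
      linarith
    linarith
  have hfinal : (A : ℚ) ≤ 2 * L * (F.card : ℚ) := by
    rcases eq_or_lt_of_le hA0 with h | h
    · rw [← h]
      push_cast
      positivity
    · have hA1 : (1:ℚ) ≤ (A:ℚ) := by exact_mod_cast h
      have hcard : (0:ℚ) ≤ (F.card : ℚ) := by positivity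
      nlinarith
  have hAM : A ≤ Mb ends S q d0 := by
    have := Int.le_ceil (2 * L * (((Finset.univ \ S : Finset E)).card : ℚ))
    have h2 : (A:ℚ) ≤ ((Mb ends S q d0 : ℤ) : ℚ) := by
      unfold Mb
      rw [← hL, ← hF]
      linarith
    exact_mod_cast h2
  exact le_trans (habs v) hAM
lemma exists_min (ends : E → V × V) (S : Finset E) (q : V → ℚ) (d0 : V → ℤ) (v₀ : V)
    (hconn : ConnF ends (Finset.univ \ S)) :
    ∃ t : V → ℤ, t v₀ = 0 ∧
      (∀ s : V → ℤ, s v₀ = 0 → PhiF ends S q d0 t ≤ PhiF ends S q d0 s) ∧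
      (∀ s : V → ℤ, s v₀ = 0 → PhiF ends S q d0 s = PhiF ends S q d0 t →
        ∑ v, s v ≤ ∑ v, t v) := by
  classical
  set M := Mb ends S q d0 with hM
  set B : Finset (V → ℤ) := (Fintype.piFinset fun _ : V => Finset.Icc (-M) M).filter
    (fun t => t v₀ = 0 ∧ PhiF ends S q d0 t ≤ 0) with hB
  have hmemB : ∀ s : V → ℤ, s v₀ = 0 → PhiF ends S q d0 s ≤ 0 → s ∈ B := by
    intro s hs0 hsphi
    refine Finset.mem_filter.2 ⟨Fintype.mem_piFinset.2 fun v => ?_, hs0, hsphi⟩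
    have := bound_of_phi ends S q d0 hconn s hs0 hsphi v
    rw [Finset.mem_Icc]
    rw [abs_le] at this
    exact this
  have h0B : (fun _ => (0:ℤ)) ∈ B :=
    hmemB _ rfl (le_of_eq (phi_zero ends S q d0))
  obtain ⟨t1, ht1B, ht1min⟩ := B.exists_min_image (PhiF ends S q d0) ⟨_, h0B⟩
  have ht1le0 : PhiF ends S q d0 t1 ≤ 0 := by
    have := ht1min _ h0B
    rwa [phi_zero] at this
  set B2 : Finset (V → ℤ) := B.filter (fun s => PhiF ends S q d0 s = PhiF ends S q d0 t1)
    with hB2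
  obtain ⟨t2, ht2B2, ht2max⟩ := B2.exists_max_image (fun s => ∑ v, s v)
    ⟨t1, Finset.mem_filter.2 ⟨ht1B, rfl⟩⟩
  obtain ⟨ht2B, ht2phi⟩ := Finset.mem_filter.1 ht2B2
  obtain ⟨-, ht20, -⟩ := Finset.mem_filter.1 ht2B
  have hglob : ∀ s : V → ℤ, s v₀ = 0 → PhiF ends S q d0 t2 ≤ PhiF ends S q d0 s := by
    intro s hs0
    by_contra h
    push_neg at h
    have hs : PhiF ends S q d0 s ≤ 0 := le_of_lt (lt_of_lt_of_le h (ht2phi ▸ ht1le0))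
    have := ht1min s (hmemB s hs0 hs)
    rw [ht2phi] at h
    exact absurd this (not_le.2 h)
  refine ⟨t2, ht20, hglob, ?_⟩
  intro s hs0 hsphi
  have hsle : PhiF ends S q d0 s ≤ 0 := by rw [hsphi, ht2phi]; exact ht1le0
  have hsB2 : s ∈ B2 := Finset.mem_filter.2 ⟨hmemB s hs0 hsle, by rw [hsphi, ht2phi]⟩
  exact ht2max s hsB2

lemma exists_qs (ends : E → V × V) (S : Finset E) (q : V → ℚ) (qz : ℤ)
    (hq : ∑ v, q v = (qz : ℚ)) (v₀ : V)
    (hconn : ConnF ends (Finset.univ \ S)) (d0 : V → ℤ)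
    (h0 : ∑ v, d0 v = qz - S.card) :
    ∃ t : V → ℤ, Quasistable ends S q v₀
      (fun v => d0 v + lapF ends (Finset.univ \ S) t v) := by
  classical
  have hc : ∑ v, cfun ends S q d0 v = 0 := csum_zero ends S q d0 qz hq h0
  obtain ⟨t, ht0, hmin, hmax⟩ := exists_min ends S q d0 v₀ hconn
  set F : Finset E := Finset.univ \ S with hF
  have hPhiW : ∀ W : Finset V,
      0 ≤ PhiF ends S q d0 (fun v => t v - if v ∈ W then 1 else 0) - PhiF ends S q d0 t := by
    intro W
    by_cases hv : v₀ ∈ W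
    · have hs0 : (fun v => (t v - if v ∈ W then 1 else 0) + 1) v₀ = 0 := by
        simp [hv, ht0]
      have h1 := hmin (fun v => (t v - if v ∈ W then 1 else 0) + 1) hs0
      rw [phi_const ends S q d0 hc _ 1] at h1
      linarith
    · have hs0 : (fun v => t v - if v ∈ W then 1 else 0) v₀ = 0 := by
        simp [hv, ht0]
      linarith [hmin (fun v => t v - if v ∈ W then 1 else 0) hs0]
  have hineq : ∀ W : Finset V,
      (∑ w ∈ W, ((d0 w : ℚ) + (lapF ends F t w : ℚ))) + (insideE ends W S : ℚ)
        ≥ (∑ w ∈ W, q w) - (valAB ends W Wᶜ : ℚ) / 2 := by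
    intro W
    have h1 := hPhiW W
    rw [phi_diff] at h1
    have h2 : ((∑ v ∈ W, sdeg ends S v : ℕ) : ℚ)
        = 2 * (insideE ends W S : ℚ) + (valS ends S W Wᶜ : ℚ) := by
      rw [sum_sdeg]; push_cast; ring
    have h3 : ((valAB ends W Wᶜ : ℕ) : ℚ)
        = (valS ends F W Wᶜ : ℚ) + (valS ends S W Wᶜ : ℚ) := by
      rw [valAB_split ends S]; push_cast; ring
    have h4 : ∑ w ∈ W, (q w - (sdeg ends S w : ℚ) / 2)
        = ∑ w ∈ W, q w - (∑ w ∈ W, (sdeg ends S w : ℚ)) / 2 := by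
      rw [Finset.sum_sub_distrib, Finset.sum_div]
    have h5 : (∑ w ∈ W, (sdeg ends S w : ℚ)) = ((∑ w ∈ W, sdeg ends S w : ℕ) : ℚ) := by
      push_cast; rfl
    linarith
  refine ⟨t, ⟨?_, ?_⟩, ?_⟩
  · have h1 : ∑ v, (d0 v + lapF ends F t v) = qz - S.card := by
      rw [Finset.sum_add_distrib, lap_total, h0, add_zero]
    rw [h1]
    push_cast
    rw [hq]
  · intro W _
    have := hineq W
    push_cast
    push_cast at this
    linarith
  · intro W hW hv₀
    by_contra hlt
    push_neg at hlt
    have h1 := hineq W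
    push_cast at hlt
    have heq : (∑ w ∈ W, ((d0 w : ℚ) + (lapF ends F t w : ℚ))) + (insideE ends W S : ℚ)
        = (∑ w ∈ W, q w) - (valAB ends W Wᶜ : ℚ) / 2 := by linarith
    have hzero : PhiF ends S q d0 (fun v => t v - if v ∈ W then 1 else 0)
        - PhiF ends S q d0 t = 0 := by
      rw [phi_diff]
      have h2 : ((∑ v ∈ W, sdeg ends S v : ℕ) : ℚ)
          = 2 * (insideE ends W S : ℚ) + (valS ends S W Wᶜ : ℚ) := by
        rw [sum_sdeg]; push_cast; ring
      have h3 : ((valAB ends W Wᶜ : ℕ) : ℚ)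
          = (valS ends F W Wᶜ : ℚ) + (valS ends S W Wᶜ : ℚ) := by
        rw [valAB_split ends S]; push_cast; ring
      have h4 : ∑ w ∈ W, (q w - (sdeg ends S w : ℚ) / 2)
          = ∑ w ∈ W, q w - (∑ w ∈ W, (sdeg ends S w : ℚ)) / 2 := by
        rw [Finset.sum_sub_distrib, Finset.sum_div]
      have h5 : (∑ w ∈ W, (sdeg ends S w : ℚ)) = ((∑ w ∈ W, sdeg ends S w : ℕ) : ℚ) := by
        push_cast; rfl
      linarith
    have hs0 : (fun v => (t v - if v ∈ W then 1 else 0) + 1) v₀ = 0 := by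
      simp [hv₀, ht0]
    have hphis : PhiF ends S q d0 (fun v => (t v - if v ∈ W then 1 else 0) + 1)
        = PhiF ends S q d0 t := by
      rw [phi_const ends S q d0 hc _ 1]
      linarith
    have hsum := hmax (fun v => (t v - if v ∈ W then 1 else 0) + 1) hs0 hphis
    have hcard : W.card < Fintype.card V :=
      Finset.card_lt_card ((Finset.subset_univ W).ssubset_of_ne hW)
    have hsum2 : ∑ v, ((t v - if v ∈ W then 1 else 0) + 1)
        = ∑ v, t v - W.card + Fintype.card V := by
      rw [Finset.sum_add_distrib, Finset.sum_sub_distrib]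
      simp [Finset.sum_ite_mem, Finset.card_univ]
    rw [hsum2] at hsum
    omega
lemma unique_qs (ends : E → V × V) (S : Finset E) (q : V → ℚ) (v₀ : V)
    (hconn : ConnF ends (Finset.univ \ S)) (d d' : V → ℤ)
    (hd : Quasistable ends S q v₀ d) (hd' : Quasistable ends S q v₀ d')
    (u : V → ℤ) (hu : ∀ v, d' v = d v + lapF ends (Finset.univ \ S) u v) :
    ∀ v, d' v = d v := by
  classical
  set F : Finset E := Finset.univ \ S with hF
  rcases isEmpty_or_nonempty V with hV | hV
  · intro v
    exact (hV.false v).elim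
  obtain ⟨vm, -, hvm⟩ := Finset.exists_max_image Finset.univ u ⟨Classical.arbitrary V,
    Finset.mem_univ _⟩
  set W : Finset V := Finset.univ.filter (fun v => u vm ≤ u v) with hW
  have hmemW : ∀ v, v ∈ W ↔ u vm ≤ u v := by
    intro v
    simp [hW]
  have hWuniv : W = Finset.univ := by
    by_contra hWne'
    have hvmW : vm ∈ W := (hmemW vm).2 le_rfl
    have hWne : W.Nonempty := ⟨vm, hvmW⟩
    have hcWuniv : Wᶜ ≠ Finset.univ := by
      intro h
      have : vm ∈ Wᶜ := h ▸ Finset.mem_univ vm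
      exact (Finset.mem_compl.1 this) hvmW
    have hcross : 1 ≤ valS ends F W Wᶜ := cross_pos ends hconn hWne hWne'
    -- the Laplacian decreases the degree on the maximum set
    have hstep : ∑ v ∈ W, lapF ends F u v ≤ -(valS ends F W Wᶜ : ℤ) := by
      rw [lap_sum]
      have hval : (valS ends F W Wᶜ : ℤ) = ∑ e ∈ F,
          (if ((ends e).1 ∈ W ∧ (ends e).2 ∈ Wᶜ) ∨ ((ends e).1 ∈ Wᶜ ∧ (ends e).2 ∈ W)
            then 1 else 0) := by
        unfold valS
        rw [Finset.card_filter]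
        push_cast
        rfl
      rw [hval, ← Finset.sum_neg_distrib]
      refine Finset.sum_le_sum fun e _ => ?_
      have h1 := hvm (ends e).1 (Finset.mem_univ _)
      have h2 := hvm (ends e).2 (Finset.mem_univ _)
      by_cases ha : (ends e).1 ∈ W <;> by_cases hb : (ends e).2 ∈ W
      · simp [ha, hb, Finset.mem_compl]
      · have h3 : u (ends e).1 = u vm := le_antisymm h1 ((hmemW _).1 ha)
        have h4 : u (ends e).2 < u vm := lt_of_not_ge (fun h => hb ((hmemW _).2 h))
        simp only [ha, hb, Finset.mem_compl, if_true, if_false, not_false_iff]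
        simp only [and_true, true_and, and_false, false_and, or_false, false_or, if_true]
        omega
      · have h3 : u (ends e).2 = u vm := le_antisymm h2 ((hmemW _).1 hb)
        have h4 : u (ends e).1 < u vm := lt_of_not_ge (fun h => ha ((hmemW _).2 h))
        simp only [ha, hb, Finset.mem_compl, if_true, if_false, not_false_iff]
        simp only [and_true, true_and, and_false, false_and, or_false, false_or, if_true]
        omega
      · simp [ha, hb, Finset.mem_compl]
    -- rational bookkeeping
    have e1 : (∑ w ∈ W, (d w : ℚ)) + ∑ w ∈ Wᶜ, (d w : ℚ) = ∑ w, (d w : ℚ) :=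
      Finset.sum_add_sum_compl W _
    have e1' : (∑ w ∈ W, (d' w : ℚ)) + ∑ w ∈ Wᶜ, (d' w : ℚ) = ∑ w, (d' w : ℚ) :=
      Finset.sum_add_sum_compl W _
    have e2 : (∑ w ∈ W, q w) + ∑ w ∈ Wᶜ, q w = ∑ w, q w :=
      Finset.sum_add_sum_compl W q
    have e3 : (insideE ends W S : ℚ) + (insideE ends Wᶜ S : ℚ) + (valS ends S W Wᶜ : ℚ)
        = S.card := by
      have := inside_compl ends S W
      push_cast [← this]
      ring
    have e4 : (valAB ends Wᶜ Wᶜᶜ : ℚ) = (valAB ends W Wᶜ : ℚ) := by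
      rw [compl_compl]
      unfold valAB
      rw [valS_symm]
    have e5 : (valAB ends W Wᶜ : ℚ) = (valS ends F W Wᶜ : ℚ) + (valS ends S W Wᶜ : ℚ) := by
      rw [valAB_split ends S]
      push_cast
      rfl
    have e6 : (∑ w ∈ W, (d' w : ℚ)) ≤ (∑ w ∈ W, (d w : ℚ)) - (valS ends F W Wᶜ : ℚ) := by
      have h1 : ∑ w ∈ W, d' w = ∑ w ∈ W, d w + ∑ w ∈ W, lapF ends F u w := by
        rw [← Finset.sum_add_distrib]
        exact Finset.sum_congr rfl fun w _ => hu w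
      have h2 : ∑ w ∈ W, d' w ≤ ∑ w ∈ W, d w - valS ends F W Wᶜ := by omega
      exact_mod_cast h2
    have hsumd : (∑ w, (d w : ℚ)) = ∑ w, q w - S.card := by
      have := hd.1.1
      push_cast at this ⊢
      linarith
    have hsumd' : (∑ w, (d' w : ℚ)) = ∑ w, q w - S.card := by
      have := hd'.1.1
      push_cast at this ⊢
      linarith
    by_cases hv : v₀ ∈ W
    · have hstrict := hd'.2 W hWne' hv
      have hge := hd.1.2 Wᶜ hcWuniv
      rw [e4] at hge
      linarith
    · have hge := hd'.1.2 W hWne'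
      have hstrict := hd.2 Wᶜ hcWuniv (Finset.mem_compl.2 hv)
      rw [e4] at hstrict
      linarith
  -- W = univ: u is constant, so the Laplacian vanishes
  intro v
  have hconst : ∀ w, u w = u vm := by
    intro w
    have : w ∈ W := hWuniv ▸ Finset.mem_univ w
    exact le_antisymm (hvm w (Finset.mem_univ w)) ((hmemW w).1 this)
  rw [hu v, lap_eq]
  have : ∑ e ∈ F, ((if (ends e).1 = v then u (ends e).2 - u (ends e).1 else 0)
      + (if (ends e).2 = v then u (ends e).1 - u (ends e).2 else 0)) = 0 := by
    refine Finset.sum_eq_zero fun e _ => ?_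
    rw [hconst (ends e).1, hconst (ends e).2]
    split_ifs <;> ring
  rw [this, add_zero]
end Stmt11Aux

/-- each residue class modulo the image of the Laplacian of Γ∖S
contains exactly one v₀-quasistable 0-cochain. -/
theorem stmt11 [Fintype V] [Fintype E] [DecidableEq V] [DecidableEq E] (ends : E → V × V) (S : Finset E) (q : V → ℚ) (qz : ℤ)
    (hq : ∑ v, q v = (qz : ℚ)) (v₀ : V)
    (hconn : ConnF ends (Finset.univ \ S)) (d0 : V → ℤ)
    (h0 : ∑ v, d0 v = qz - S.card) :
    ∃! d : V → ℤ, Quasistable ends S q v₀ d ∧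
      ∃ t : V → ℤ, ∀ v, d v = d0 v + lapF ends (Finset.univ \ S) t v := by
  obtain ⟨t, hqs⟩ := Stmt11Aux.exists_qs ends S q qz hq v₀ hconn d0 h0
  refine ⟨fun v => d0 v + lapF ends (Finset.univ \ S) t v, ⟨hqs, t, fun v => rfl⟩, ?_⟩
  rintro y ⟨hy, s, hs⟩
  funext v
  have hu : ∀ w, y w = (fun v => d0 v + lapF ends (Finset.univ \ S) t v) w
      + lapF ends (Finset.univ \ S) (fun x => s x - t x) w := by
    intro w
    rw [Stmt11Aux.lap_sub, hs w]
    ring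
  exact Stmt11Aux.unique_qs ends S q v₀ hconn _ y hqs hy _ hu v
end

section
/- Let X be a nodal curve with partial normalization ν_S : X_S → X at a set S of nodes, and let q be a polarization on X. Then the assignment q^S defined on subcurves of X_S by q^S_{Y_S} := q_Y - |S_e^Y|/2 - |S_i^Y|, where S_e^Y = S ∩ Y ∩ Yᶜ and S_i^Y = S ∩ (Y ∖ Yᶜ), is additive on subcurves without common components and has integral total degree; i.e., it is a polarization on X_S. -/
open Finset

variable {V E : Type}

/-- The induced polarization `q^S` on the partial normalization at `S`,
expressed on the dual graph: q^S_W = q_W - |S_e^W|/2 - |S_i^W|. -/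
def qSpol [Fintype V] [Fintype E] [DecidableEq V] [DecidableEq E] (ends : E → V × V) (S : Finset E) (q : V → ℚ)
    (W : Finset V) : ℚ :=
  (∑ w ∈ W, q w) - (valS ends S W Wᶜ : ℚ) / 2 - (insideE ends W S : ℚ)

/-- `q^S` is additive on disjoint subcurves and has integral total
degree, i.e. it is a polarization on the partial normalization X_S. -/
theorem stmt14 [Fintype V] [Fintype E] [DecidableEq V] [DecidableEq E] (ends : E → V × V) (S : Finset E) (q : V → ℚ) (qz : ℤ)
    (hq : ∑ v, q v = (qz : ℚ)) :
    (∀ W Z : Finset V, Disjoint W Z →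
        qSpol ends S q (W ∪ Z) = qSpol ends S q W + qSpol ends S q Z) ∧
      ∃ n : ℤ, qSpol ends S q Finset.univ = (n : ℚ) := by
  constructor
  · intro W Z hWZ
    have key : valS ends S (W ∪ Z) (W ∪ Z)ᶜ + 2 * insideE ends (W ∪ Z) S =
        valS ends S W Wᶜ + 2 * insideE ends W S +
          (valS ends S Z Zᶜ + 2 * insideE ends Z S) := by
      unfold valS insideE
      simp only [Finset.card_filter]
      simp only [Finset.mul_sum, ← Finset.sum_add_distrib]
      apply Finset.sum_congr rfl
      intro e _
      have h1 : ¬((ends e).1 ∈ W ∧ (ends e).1 ∈ Z) := by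
        intro ⟨h, h'⟩; exact (Finset.disjoint_left.mp hWZ h) h'
      have h2 : ¬((ends e).2 ∈ W ∧ (ends e).2 ∈ Z) := by
        intro ⟨h, h'⟩; exact (Finset.disjoint_left.mp hWZ h) h'
      simp only [Finset.mem_union, Finset.mem_compl, Finset.mem_union]
      by_cases haW : (ends e).1 ∈ W <;> by_cases haZ : (ends e).1 ∈ Z <;>
        by_cases hbW : (ends e).2 ∈ W <;> by_cases hbZ : (ends e).2 ∈ Z <;>
        simp_all
    have hsum : ∑ w ∈ W ∪ Z, q w = ∑ w ∈ W, q w + ∑ w ∈ Z, q w :=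
      Finset.sum_union hWZ
    unfold qSpol
    have keyQ : (valS ends S (W ∪ Z) (W ∪ Z)ᶜ : ℚ) + 2 * (insideE ends (W ∪ Z) S : ℚ) =
        (valS ends S W Wᶜ : ℚ) + 2 * (insideE ends W S : ℚ) +
          ((valS ends S Z Zᶜ : ℚ) + 2 * (insideE ends Z S : ℚ)) := by
      exact_mod_cast congrArg (Nat.cast : ℕ → ℚ) key
    rw [hsum]; linarith
  · refine ⟨qz - S.card, ?_⟩
    unfold qSpol valS insideE
    have h1 : (Finset.filter (fun e => ((ends e).1 ∈ (Finset.univ : Finset V) ∧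
        (ends e).2 ∈ (Finset.univ : Finset V)ᶜ) ∨ ((ends e).1 ∈ (Finset.univ : Finset V)ᶜ ∧
        (ends e).2 ∈ (Finset.univ : Finset V))) S) = ∅ := by
      apply Finset.filter_false_of_mem
      intro e _
      simp
    have h2 : (Finset.filter (fun e => (ends e).1 ∈ (Finset.univ : Finset V) ∧
        (ends e).2 ∈ (Finset.univ : Finset V)) S) = S := by
      apply Finset.filter_true_of_mem
      intro e _
      simp
    rw [h1, h2, hq]
    simp
end

section
/- Let X be a nodal curve and q a polarization on X. If q is not general, then there exists a proper subcurve Z ⊊ X with both Z and Zᶜ connected and a q-semistable line bundle L on X such that deg_Z(L) = q_Z - δ_Z/2. Moreover, if q is not non-degenerate, Z can be chosen not to be a spine. -/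
open Finset

variable {V E : Type}

/-!
If `q` is integral at `W₀`, let `C` be the component of `W₀` through a vertex `u ∈ W₀` and `Z`
the component of `Cᶜ` through a vertex `v ∉ W₀`. Then `Z` and `Zᶜ` are connected (the whole
graph is), and `Z` is a union of components of `W₀` and `W₀ᶜ`. Since `Y ↦ q_Y - δ_Y/2` is
additive modulo `ℤ` on disjoint unions, `q_Z - δ_Z/2 = n` is an integer.

Moving half a unit of `q` across each node joining `Z` and `Zᶜ` gives polarizations of integral
degree on the connected curves `Z` and `Zᶜ`. Each admits a semistable multidegree: remove a
vertex `u` that does not disconnect, solve on the rest, put `⌈q_u - δ_u/2⌉` on `u`, and let a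
neighbour of `u` absorb the rounding. The two multidegrees glue to a `q`-semistable `d` with
`d_Z = n`. If `W₀` is not a spine, take for `u`, `v` the ends of a non-separating node of
`W₀ ∩ W₀ᶜ`; that node then joins `Z` and `Zᶜ`, so `Z` is not a spine either.
-/

section EdgeCount

variable [Fintype E] [DecidableEq V] [DecidableEq E] (ends : E → V × V)

lemma valAB_comm (A B : Finset V) : valAB ends A B = valAB ends B A := by
  unfold valAB valS
  congr 1
  exact filter_congr fun _ _ => or_comm

@[simp]
lemma valAB_empty_left (B : Finset V) : valAB ends ∅ B = 0 := by
  simp [valAB, valS]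

@[simp]
lemma valAB_empty_right (A : Finset V) : valAB ends A ∅ = 0 := by
  simp [valAB, valS]

lemma valAB_union_right {A B C : Finset V} (hAB : Disjoint A B) (hBC : Disjoint B C) :
    valAB ends A (B ∪ C) = valAB ends A B + valAB ends A C := by
  unfold valAB valS
  rw [← card_union_of_disjoint, ← filter_or]
  · congr 1
    exact filter_congr fun _ _ => by simp only [mem_union]; tauto
  · refine disjoint_filter.2 fun e _ h₁ h₂ => ?_
    rw [disjoint_left] at hAB hBC
    rcases h₁ with ⟨h₁, h₁'⟩ | ⟨h₁, h₁'⟩ <;> rcases h₂ with ⟨h₂, h₂'⟩ | ⟨h₂, h₂'⟩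
    exacts [hBC h₁' h₂', hAB h₂' h₁', hAB h₂ h₁, hBC h₁ h₂]

lemma valAB_union_left {A B C : Finset V} (hAB : Disjoint A B) (hAC : Disjoint A C) :
    valAB ends (A ∪ B) C = valAB ends A C + valAB ends B C := by
  rw [valAB_comm, valAB_union_right ends hAC.symm hAB, valAB_comm ends C, valAB_comm ends C]

lemma valAB_insert_left {u : V} {A B : Finset V} (huA : u ∉ A) (huB : u ∉ B) :
    valAB ends (insert u A) B = valAB ends {u} B + valAB ends A B := by
  rw [insert_eq, valAB_union_left ends (disjoint_singleton_left.2 huA)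
    (disjoint_singleton_left.2 huB)]

lemma valAB_insert_right {u : V} {A B : Finset V} (hAB : Disjoint A B) (huB : u ∉ B) :
    valAB ends A (insert u B) = valAB ends A B + valAB ends A {u} := by
  rw [insert_eq, union_comm, valAB_union_right ends hAB (disjoint_singleton_right.2 huB)]

lemma one_le_valAB {A B : Finset V} (e : E) {a b : V} (ha : a ∈ A) (hb : b ∈ B)
    (he : ends e = (a, b) ∨ ends e = (b, a)) : 1 ≤ valAB ends A B :=
  card_pos.2 ⟨e, mem_filter.2 ⟨mem_univ e, by rcases he with he | he <;> simp [he, ha, hb]⟩⟩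

lemma sum_valAB_singleton_left {A B : Finset V} (hAB : Disjoint A B) :
    ∑ v ∈ A, valAB ends {v} B = valAB ends A B := by
  induction A using Finset.induction_on with
  | empty => simp
  | insert a A ha ih =>
    rw [sum_insert ha, insert_eq, valAB_union_left ends (disjoint_singleton_left.2 ha)
      (disjoint_of_subset_left (singleton_subset_iff.2 (mem_insert_self a A)) hAB),
      ih (disjoint_of_subset_left (subset_insert a A) hAB)]

lemma sum_valAB_singleton_div_two {A B : Finset V} (hAB : Disjoint A B) :
    ∑ v ∈ A, (valAB ends {v} B : ℚ) / 2 = valAB ends A B / 2 := by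
  rw [← sum_div, ← Nat.cast_sum, sum_valAB_singleton_left ends hAB]

end EdgeCount

section Connectivity

variable {ends : E → V × V}

-- `ConnOn ends A` unfolds to `∀ u ∈ A, ∀ v ∈ A, Relation.ReflTransGen (AdjIn ends A) u v`.
variable (ends) in
def AdjIn (A : Finset V) (a b : V) : Prop :=
  a ∈ A ∧ b ∈ A ∧ ∃ e : E, ends e = (a, b) ∨ ends e = (b, a)

lemma AdjIn.symm {A : Finset V} {a b : V} (h : AdjIn ends A a b) : AdjIn ends A b a :=
  ⟨h.2.1, h.1, h.2.2.imp fun _ => Or.symm⟩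

lemma AdjIn.mono {A B : Finset V} (hAB : A ⊆ B) {a b : V} (h : AdjIn ends A a b) :
    AdjIn ends B a b :=
  ⟨hAB h.1, hAB h.2.1, h.2.2⟩

lemma reflTransGen_adjIn_symm {A : Finset V} {a b : V}
    (h : Relation.ReflTransGen (AdjIn ends A) a b) : Relation.ReflTransGen (AdjIn ends A) b a := by
  induction h with
  | refl => rfl
  | tail _ hbc ih => exact ih.head hbc.symm

lemma reflTransGen_adjIn_mono {A B : Finset V} (hAB : A ⊆ B) {a b : V}
    (h : Relation.ReflTransGen (AdjIn ends A) a b) : Relation.ReflTransGen (AdjIn ends B) a b :=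
  Relation.ReflTransGen.mono (fun _ _ => AdjIn.mono hAB) _ _ h

variable (ends) in
open Classical in
noncomputable def compOf (A : Finset V) (v : V) : Finset V :=
  A.filter (Relation.ReflTransGen (AdjIn ends A) v)

lemma mem_compOf {A : Finset V} {v w : V} :
    w ∈ compOf ends A v ↔ w ∈ A ∧ Relation.ReflTransGen (AdjIn ends A) v w := by
  classical
  simp [compOf]

lemma mem_compOf_self {A : Finset V} {v : V} (hv : v ∈ A) : v ∈ compOf ends A v :=
  mem_compOf.2 ⟨hv, .refl⟩

variable (ends) in
def adjGraph : SimpleGraph V := SimpleGraph.fromRel fun a b => ∃ e, ends e = (a, b)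

lemma reachable_induce_of_reflTransGen {A : Finset V} {a b : V}
    (h : Relation.ReflTransGen (AdjIn ends A) a b) (ha : a ∈ A) (hb : b ∈ A) :
    ((adjGraph ends).induce (A : Set V)).Reachable ⟨a, ha⟩ ⟨b, hb⟩ := by
  induction h with
  | refl => rfl
  | @tail b c _ hbc ih =>
    refine (ih hbc.1).trans ?_
    by_cases hne : b = c
    · subst hne; rfl
    · exact SimpleGraph.Adj.reachable (by simpa [adjGraph, hne, exists_or] using hbc.2.2)

lemma Boundary.exists_mem_notMem {W₀ : Finset V} {e : E} (h : Boundary ends W₀ e) :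
    ∃ u v, u ∈ W₀ ∧ v ∉ W₀ ∧ ∀ W : Finset V, u ∉ W → v ∈ W → Boundary ends W e := by
  rcases h with ⟨h₁, h₂⟩ | ⟨h₁, h₂⟩
  · exact ⟨_, _, h₁, h₂, fun _ hu hv => .inr ⟨hu, hv⟩⟩
  · exact ⟨_, _, h₂, h₁, fun _ hu hv => .inl ⟨hv, hu⟩⟩

variable [DecidableEq V]

lemma isCompOf_compOf {A : Finset V} {v : V} (hv : v ∈ A) :
    IsCompOf ends (compOf ends A v) A := by
  have reach : ∀ {x}, Relation.ReflTransGen (AdjIn ends A) v x →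
      Relation.ReflTransGen (AdjIn ends (compOf ends A v)) v x := by
    intro x h
    induction h with
    | refl => rfl
    | tail hvb hbc ih =>
      exact ih.tail ⟨mem_compOf.2 ⟨hbc.1, hvb⟩, mem_compOf.2 ⟨hbc.2.1, hvb.tail hbc⟩, hbc.2.2⟩
  refine ⟨⟨v, mem_compOf_self hv⟩, fun w hw => (mem_compOf.1 hw).1, ?_, ?_⟩
  · intro x hx y hy
    exact (reflTransGen_adjIn_symm (reach (mem_compOf.1 hx).2)).trans (reach (mem_compOf.1 hy).2)
  · rintro e (⟨h₁, h₂⟩ | ⟨h₁, h₂⟩) <;> simp only [mem_sdiff, mem_compOf] at h₁ h₂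
    · exact h₂.2 ⟨h₂.1, h₁.2.tail ⟨h₁.1, h₂.1, e, .inl rfl⟩⟩
    · exact h₁.2 ⟨h₁.1, h₂.2.tail ⟨h₂.1, h₁.1, e, .inr rfl⟩⟩

lemma IsCompOf.mem_of_reflTransGen {A C : Finset V} (hC : IsCompOf ends C A) {x y : V}
    (hx : x ∈ C) (h : Relation.ReflTransGen (AdjIn ends A) x y) : y ∈ C := by
  induction h with
  | refl => exact hx
  | tail _ hbc ih =>
    by_contra hc
    obtain ⟨-, hcA, e, he | he⟩ := hbc
    · exact hC.2.2.2 e (.inl ⟨he ▸ ih, he ▸ mem_sdiff.2 ⟨hcA, hc⟩⟩)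
    · exact hC.2.2.2 e (.inr ⟨he ▸ mem_sdiff.2 ⟨hcA, hc⟩, he ▸ ih⟩)

lemma IsCompOf.subset_of_connOn {A C P : Finset V} (hC : IsCompOf ends C A) (hPA : P ⊆ A)
    (hP : ConnOn ends P) {x : V} (hxP : x ∈ P) (hxC : x ∈ C) : P ⊆ C :=
  fun _ hp => hC.mem_of_reflTransGen hxC (reflTransGen_adjIn_mono hPA (hP x hxP _ hp))

lemma IsCompOf.eq_of_mem {A C D : Finset V} (hC : IsCompOf ends C A) (hD : IsCompOf ends D A)
    {x : V} (hxC : x ∈ C) (hxD : x ∈ D) : C = D :=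
  (hD.subset_of_connOn hC.2.1 hC.2.2.1 hxC hxD).antisymm
    (hC.subset_of_connOn hD.2.1 hD.2.2.1 hxD hxC)

lemma ConnOn.exists_connOn_erase {A : Finset V} (hA : ConnOn ends A)
    (hA1 : 1 < #A) : ∃ u ∈ A, ConnOn ends (A.erase u) := by
  have : Nontrivial (A : Set V) := (one_lt_card_iff_nontrivial.1 hA1).coe_sort
  have hG : ((adjGraph ends).induce (A : Set V)).Connected :=
    { preconnected := fun a b => reachable_induce_of_reflTransGen (hA a a.2 b b.2) a.2 b.2
      nonempty := inferInstance }
  obtain ⟨u, hu⟩ := hG.exists_connected_induce_compl_singleton_of_finite_nontrivial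
  refine ⟨u, u.2, fun a ha b hb => ?_⟩
  have hreach := hu.preconnected
    ⟨⟨a, mem_of_mem_erase ha⟩, by simpa [Subtype.ext_iff] using ne_of_mem_erase ha⟩
    ⟨⟨b, mem_of_mem_erase hb⟩, by simpa [Subtype.ext_iff] using ne_of_mem_erase hb⟩
  rw [SimpleGraph.reachable_iff_reflTransGen] at hreach
  refine Relation.ReflTransGen.lift (fun x => x.1.1) (fun x y hxy => ?_) _ _ hreach
  obtain ⟨⟨x, hxA⟩, hxu⟩ := x
  obtain ⟨⟨y, hyA⟩, hyu⟩ := y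
  simp only [Set.mem_compl_iff, Set.mem_singleton_iff, Subtype.ext_iff] at hxu hyu
  simp only [SimpleGraph.comap_adj, adjGraph, SimpleGraph.fromRel_adj, ← exists_or] at hxy
  exact ⟨mem_erase.2 ⟨hxu, hxA⟩, mem_erase.2 ⟨hyu, hyA⟩, hxy.2⟩

lemma ConnOn.exists_adj_of_ne {A : Finset V} (hA : ConnOn ends A) {u x : V} (hu : u ∈ A)
    (hx : x ∈ A) (hxu : x ≠ u) : ∃ w ∈ A.erase u, ∃ e : E, ends e = (u, w) ∨ ends e = (w, u) := by
  by_contra h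
  suffices ∀ y, Relation.ReflTransGen (AdjIn ends A) u y → y = u from hxu (this x (hA u hu x hx))
  intro y hy
  induction hy with
  | refl => rfl
  | tail _ hbc ih =>
    subst ih
    by_contra hne
    exact h ⟨_, mem_erase.2 ⟨hne, hbc.2.1⟩, hbc.2.2⟩

variable [Fintype V] [Fintype E]

lemma IsCompOf.connOn_compl (hconn : ConnF ends (univ : Finset E)) {C D : Finset V}
    (hC : ConnOn ends C) (hCne : C.Nonempty) (hD : IsCompOf ends D Cᶜ) : ConnOn ends Dᶜ := by
  obtain ⟨c, hc⟩ := hCne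
  have hCD : C ⊆ Dᶜ := fun x hx => mem_compl.2 fun hxD => mem_compl.1 (hD.2.1 hxD) hx
  have reach : ∀ x ∈ Dᶜ, Relation.ReflTransGen (AdjIn ends Dᶜ) x c := by
    intro x hx
    induction hconn x c using Relation.ReflTransGen.head_induction_on with
    | refl => rfl
    | @head a b hab _ ih =>
      by_cases haC : a ∈ C
      · exact reflTransGen_adjIn_mono hCD (hC a haC c hc)
      have hb : b ∈ Dᶜ := by
        refine mem_compl.2 fun hbD => ?_
        obtain ⟨e, -, he | he⟩ := hab
        · exact hD.2.2.2 e (.inr ⟨he ▸ mem_sdiff.2 ⟨mem_compl.2 haC, mem_compl.1 hx⟩, he ▸ hbD⟩)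
        · exact hD.2.2.2 e (.inl ⟨he ▸ hbD, he ▸ mem_sdiff.2 ⟨mem_compl.2 haC, mem_compl.1 hx⟩⟩)
      obtain ⟨e, -, he⟩ := hab
      exact (ih hb).head ⟨hx, hb, e, he⟩
  exact fun x hx y hy => (reach x hx).trans (reflTransGen_adjIn_symm (reach y hy))

end Connectivity

section Semistable

variable [Fintype E] [DecidableEq V] [DecidableEq E] {ends : E → V × V}

variable (ends) in
def AdmitsSemistable (U : Finset V) : Prop :=
  ∀ (q : V → ℚ) (m : ℤ), ∑ v ∈ U, q v = m → ∃ d : V → ℤ, ∑ v ∈ U, d v = m ∧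
    ∀ Y ⊆ U, ∑ v ∈ Y, q v - valAB ends Y (U \ Y) / 2 ≤ ((∑ v ∈ Y, d v : ℤ) : ℚ)

lemma admitsSemistable_of_card_le_one {U : Finset V} (hU : #U ≤ 1) : AdmitsSemistable ends U := by
  intro q m hq
  refine ⟨fun _ => m, ?_, fun Y hY => ?_⟩ <;> rcases U.eq_empty_or_nonempty with rfl | hne
  · simpa [eq_comm] using hq
  · obtain ⟨x, rfl⟩ := card_eq_one.1 (hU.antisymm (card_pos.2 hne))
    simp
  · simp [subset_empty.1 hY]
  · obtain ⟨x, rfl⟩ := card_eq_one.1 (hU.antisymm (card_pos.2 hne))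
    rcases subset_singleton_iff.1 hY with rfl | rfl <;> simp_all

variable (ends) in
def shiftedPol (q : V → ℚ) (u w : V) (r : ℚ) (v : V) : ℚ :=
  q v + valAB ends {v} {u} / 2 - if v = w then r else 0

lemma sum_shiftedPol (q : V → ℚ) {u : V} (w : V) (r : ℚ) {S : Finset V} (huS : u ∉ S) :
    ∑ v ∈ S, shiftedPol ends q u w r v =
      ∑ v ∈ S, q v + valAB ends S {u} / 2 - if w ∈ S then r else 0 := by
  simp only [shiftedPol, sum_sub_distrib, sum_add_distrib, sum_ite_eq',
    sum_valAB_singleton_div_two ends (disjoint_singleton_right.2 huS)]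

lemma semistable_update_of_shiftedPol {U : Finset V} {u w : V} (huU : u ∉ U) {e : E}
    (he : ends e = (u, w) ∨ ends e = (w, u)) {q : V → ℚ} {r : ℚ} (hr0 : 0 ≤ r) (hr1 : r < 1)
    {c : ℤ} (hc : (c : ℚ) = q u - valAB ends {u} U / 2 + r) {d : V → ℤ}
    (hd : ∀ Y ⊆ U, ∑ v ∈ Y, shiftedPol ends q u w r v - valAB ends Y (U \ Y) / 2 ≤
      ((∑ v ∈ Y, d v : ℤ) : ℚ)) :
    ∀ Y ⊆ insert u U, ∑ v ∈ Y, q v - valAB ends Y (insert u U \ Y) / 2 ≤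
      ((∑ v ∈ Y, Function.update d u c v : ℤ) : ℚ) := by
  intro Y hY
  by_cases huY : u ∈ Y
  · obtain ⟨Y, huY', rfl⟩ : ∃ Y', u ∉ Y' ∧ Y = insert u Y' :=
      ⟨Y.erase u, notMem_erase u Y, (insert_erase huY).symm⟩
    have hYU : Y ⊆ U := fun v hv => (mem_insert.1 (hY (mem_insert_of_mem hv))).resolve_left
      (ne_of_mem_of_not_mem hv huY')
    have hsplit : (valAB ends {u} U : ℚ) = valAB ends {u} Y + valAB ends {u} (U \ Y) := by
      conv_lhs => rw [← union_sdiff_of_subset hYU]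
      exact_mod_cast valAB_union_right ends (disjoint_singleton_left.2 huY') disjoint_sdiff
    have hite : (if w ∈ Y then r else 0) ≤ r := by split_ifs <;> linarith
    have key := hd Y hYU
    rw [sum_shiftedPol q w r huY', valAB_comm ends Y {u}] at key
    rw [sum_insert huY', sum_insert huY', Function.update_self, sum_update_of_notMem huY',
      insert_sdiff_insert, sdiff_insert_of_notMem huU,
      valAB_insert_left ends huY' fun h => huU (mem_sdiff.1 h).1]
    push_cast at key ⊢
    linarith
  · have hYU : Y ⊆ U := fun v hv => (mem_insert.1 (hY hv)).resolve_left
      (ne_of_mem_of_not_mem hv huY)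
    have hite : (if w ∈ Y then r else 0) ≤ valAB ends Y {u} := by
      split_ifs with hwY
      · exact hr1.le.trans
          (by exact_mod_cast one_le_valAB ends e hwY (mem_singleton_self u) he.symm)
      · positivity
    have key := hd Y hYU
    rw [sum_shiftedPol q w r huY] at key
    rw [sum_update_of_notMem huY, insert_sdiff_of_notMem _ huY,
      valAB_insert_right ends disjoint_sdiff fun h => huU (mem_sdiff.1 h).1]
    push_cast at key ⊢
    linarith

lemma AdmitsSemistable.insert_of_adj {U : Finset V} (hU : AdmitsSemistable ends U) {u w : V}
    (huU : u ∉ U) (hw : w ∈ U) {e : E} (he : ends e = (u, w) ∨ ends e = (w, u)) :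
    AdmitsSemistable ends (insert u U) := by
  intro q m hq
  rw [sum_insert huU] at hq
  -- `d u := ⌈z⌉` overshoots the bound at `u` by `⌈z⌉ - z ∈ [0, 1)`; the neighbour `w` pays for it.
  set z : ℚ := q u - valAB ends {u} U / 2 with hz
  obtain ⟨d, hdU, hd⟩ := hU (shiftedPol ends q u w (⌈z⌉ - z)) (m - ⌈z⌉) (by
    rw [sum_shiftedPol q w _ huU, if_pos hw, valAB_comm]
    push_cast
    linarith)
  refine ⟨Function.update d u ⌈z⌉, ?_, semistable_update_of_shiftedPol huU he
    (sub_nonneg.2 (Int.le_ceil z)) (by linarith [Int.ceil_lt_add_one z]) (by ring) hd⟩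
  rw [sum_insert huU, Function.update_self, sum_update_of_notMem huU, hdU]
  ring

theorem ConnOn.admitsSemistable {U : Finset V} (hU : ConnOn ends U) : AdmitsSemistable ends U := by
  induction U using Finset.strongInduction with
  | H U ih =>
  rcases le_or_gt #U 1 with hU1 | hU1
  · exact admitsSemistable_of_card_le_one hU1
  obtain ⟨u, huU, hU'⟩ := hU.exists_connOn_erase hU1
  obtain ⟨x, hxU, hxu⟩ := exists_mem_ne hU1 u
  obtain ⟨w, hw, e, he⟩ := hU.exists_adj_of_ne huU hxU hxu
  rw [← insert_erase huU]
  exact (ih _ (erase_ssubset huU) hU').insert_of_adj (notMem_erase u U) hw he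

end Semistable

section Polarization

variable [Fintype V] [Fintype E] [DecidableEq V] [DecidableEq E] {ends : E → V × V}

variable (ends) in
def semistableBound (q : V → ℚ) (Y : Finset V) : ℚ := ∑ v ∈ Y, q v - valAB ends Y Yᶜ / 2

lemma valAB_split_inter_sdiff (W Z : Finset V) :
    valAB ends (W ∩ Z) Zᶜ = valAB ends (W ∩ Z) (W \ Z) + valAB ends (W ∩ Z) (Zᶜ \ W) ∧
    valAB ends (W \ Z) Z = valAB ends (W \ Z) (W ∩ Z) + valAB ends (W \ Z) (Z \ W) ∧
    valAB ends W Wᶜ = valAB ends (W ∩ Z) (Z \ W) + valAB ends (W ∩ Z) (Zᶜ \ W) +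
      (valAB ends (W \ Z) (Z \ W) + valAB ends (W \ Z) (Zᶜ \ W)) := by
  have hZc : Zᶜ = W \ Z ∪ Zᶜ \ W := by ext; simp; tauto
  have hZ : Z = W ∩ Z ∪ Z \ W := by ext; simp; tauto
  have hW : W = W ∩ Z ∪ W \ Z := by ext; simp; tauto
  have hWc : Wᶜ = Z \ W ∪ Zᶜ \ W := by ext; simp; tauto
  have d₁ : Disjoint (W ∩ Z) (W \ Z) := by rw [disjoint_left]; intro; simp; tauto
  have d₂ : Disjoint (W ∩ Z) (Z \ W) := by rw [disjoint_left]; intro; simp; tauto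
  have d₃ : Disjoint (W \ Z) (Z \ W) := by rw [disjoint_left]; intro; simp; tauto
  have d₄ : Disjoint (W \ Z) (Zᶜ \ W) := by rw [disjoint_left]; intro; simp; tauto
  have d₅ : Disjoint (Z \ W) (Zᶜ \ W) := by rw [disjoint_left]; intro; simp; tauto
  have d₆ : Disjoint (W ∩ Z) (Zᶜ \ W) := by rw [disjoint_left]; intro; simp; tauto
  have h₁ := valAB_union_right ends d₁ d₄
  have h₂ := valAB_union_right ends d₁.symm d₂
  have h₃ := valAB_union_left ends (B := W \ Z) d₁ (disjoint_union_right.2 ⟨d₂, d₆⟩)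
  rw [← hZc] at h₁
  rw [← hZ] at h₂
  rw [valAB_union_right ends d₂ d₅, valAB_union_right ends d₃ d₅, ← hW, ← hWc] at h₃
  exact ⟨h₁, h₂, h₃⟩

theorem exists_semistableLB_of_connOn {q : V → ℚ} {qz : ℤ} (hq : ∑ v, q v = qz)
    {Z : Finset V} (hZ : ConnOn ends Z) (hZc : ConnOn ends Zᶜ) {n : ℤ}
    (hn : semistableBound ends q Z = n) :
    ∃ d : V → ℤ, SemistableLB ends q d ∧ ∑ v ∈ Z, d v = n := by
  have hqZ := sum_add_sum_compl Z q
  unfold semistableBound at hn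
  -- Each node joining `Z` and `Zᶜ` moves half a unit of `q` from `Z` to `Zᶜ`; this makes the
  -- degrees on both sides integral.
  obtain ⟨d₁, hd₁Z, hd₁⟩ := hZ.admitsSemistable (fun v => q v - valAB ends {v} Zᶜ / 2) n (by
    rw [sum_sub_distrib, sum_valAB_singleton_div_two ends disjoint_compl_right, hn])
  obtain ⟨d₂, hd₂Z, hd₂⟩ :=
    hZc.admitsSemistable (fun v => q v + valAB ends {v} Z / 2) (qz - n) (by
      rw [sum_add_distrib, sum_valAB_singleton_div_two ends disjoint_compl_left, valAB_comm]
      push_cast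
      linarith)
  refine ⟨Z.piecewise d₁ d₂, ⟨?_, fun W _ => ?_⟩, ?_⟩
  · rw [sum_piecewise, univ_inter, ← compl_eq_univ_sdiff, hd₁Z, hd₂Z]
    push_cast
    linarith
  · obtain ⟨hA, hB, hW⟩ := valAB_split_inter_sdiff (ends := ends) W Z
    have h₁ := hd₁ (W ∩ Z) inter_subset_right
    have h₂ := hd₂ (W \ Z) fun v hv => mem_compl.2 (mem_sdiff.1 hv).2
    rw [sdiff_inter_self_right, sum_sub_distrib, sum_valAB_singleton_div_two ends
      (disjoint_of_subset_left inter_subset_right disjoint_compl_right), hA] at h₁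
    rw [show Zᶜ \ (W \ Z) = Zᶜ \ W by ext; simp; tauto, sum_add_distrib,
      sum_valAB_singleton_div_two ends disjoint_sdiff_self_left, hB,
      valAB_comm ends (W \ Z) (W ∩ Z)] at h₂
    rw [sum_piecewise, ← sum_inter_add_sum_sdiff W Z q, hW]
    push_cast at h₁ h₂ ⊢
    linarith [(valAB ends (W \ Z) (Z \ W)).cast_nonneg (α := ℚ)]
  · rw [sum_piecewise, inter_self, sdiff_self, bot_eq_empty, sum_empty, add_zero, hd₁Z]

lemma semistableBound_union (q : V → ℚ) {A B : Finset V} (h : Disjoint A B) :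
    semistableBound ends q (A ∪ B) =
      semistableBound ends q A + semistableBound ends q B + valAB ends A B := by
  have hA : Aᶜ = B ∪ (A ∪ B)ᶜ := by ext; simp; grind [disjoint_left]
  have hB : Bᶜ = A ∪ (A ∪ B)ᶜ := by ext; simp; grind [disjoint_left]
  have hAc : Disjoint A (A ∪ B)ᶜ := disjoint_of_subset_left subset_union_left disjoint_compl_right
  have hBc : Disjoint B (A ∪ B)ᶜ := disjoint_of_subset_left subset_union_right disjoint_compl_right
  simp only [semistableBound]
  rw [hA, hB, sum_union h, valAB_union_left ends h hAc, valAB_union_right ends h hBc,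
    valAB_union_right ends h.symm hAc, valAB_comm ends B A]
  push_cast
  ring

lemma IntegralAt.exists_int_semistableBound {q : V → ℚ} {W₀ : Finset V}
    (hint : IntegralAt ends q W₀) {Y : Finset V}
    (hY : ∀ x ∈ Y, ∃ C, (IsCompOf ends C W₀ ∨ IsCompOf ends C W₀ᶜ) ∧ x ∈ C ∧ C ⊆ Y) :
    ∃ k : ℤ, semistableBound ends q Y = k := by
  induction Y using Finset.strongInduction with
  | H Y ih =>
  obtain rfl | ⟨x, hx⟩ := Y.eq_empty_or_nonempty
  · exact ⟨0, by simp [semistableBound]⟩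
  obtain ⟨C, hC, hxC, hCY⟩ := hY x hx
  have hpieces : ∀ {D}, (IsCompOf ends D W₀ ∨ IsCompOf ends D W₀ᶜ) → ∀ {p}, p ∈ C → p ∈ D →
      D = C := by
    intro D hD p hpC hpD
    rcases hC with hC | hC <;> rcases hD with hD | hD
    · exact hD.eq_of_mem hC hpD hpC
    · exact absurd (hC.2.1 hpC) (mem_compl.1 (hD.2.1 hpD))
    · exact absurd (hD.2.1 hpD) (mem_compl.1 (hC.2.1 hpC))
    · exact hD.eq_of_mem hC hpD hpC
  obtain ⟨k₁, hk₁⟩ := ih (Y \ C) (sdiff_ssubset hCY ⟨x, hxC⟩) fun z hz => by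
    obtain ⟨D, hD, hzD, hDY⟩ := hY z (mem_sdiff.1 hz).1
    refine ⟨D, hD, hzD, fun p hpD => mem_sdiff.2 ⟨hDY hpD, fun hpC => ?_⟩⟩
    exact (mem_sdiff.1 hz).2 (hpieces hD hpC hpD ▸ hzD)
  obtain ⟨k₂, hk₂ : semistableBound ends q C = k₂⟩ := hint C hC
  refine ⟨k₂ + k₁ + valAB ends C (Y \ C), ?_⟩
  conv_lhs => rw [← union_sdiff_of_subset hCY]
  rw [semistableBound_union q disjoint_sdiff, hk₁, hk₂]
  push_cast
  rfl

lemma IntegralAt.exists_separating (hconn : ConnF ends (univ : Finset E)) {q : V → ℚ}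
    {W₀ : Finset V} (hint : IntegralAt ends q W₀) {u v : V} (hu : u ∈ W₀) (hv : v ∉ W₀) :
    ∃ Z : Finset V, ConnOn ends Z ∧ ConnOn ends Zᶜ ∧
      (∃ k : ℤ, semistableBound ends q Z = k) ∧ u ∉ Z ∧ v ∈ Z := by
  have hC₁ := isCompOf_compOf (ends := ends) hu
  set C₁ := compOf ends W₀ u
  have hvC₁ : v ∈ C₁ᶜ := mem_compl.2 fun h => hv (hC₁.2.1 h)
  have hZ := isCompOf_compOf (ends := ends) hvC₁
  set Z := compOf ends C₁ᶜ v
  have hZC₁ : ∀ {x}, x ∈ Z → x ∉ C₁ := fun hx => mem_compl.1 (hZ.2.1 hx)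
  refine ⟨Z, hZ.2.2.1, hZ.connOn_compl hconn hC₁.2.2.1 hC₁.1, hint.exists_int_semistableBound ?_,
    fun h => hZC₁ h (mem_compOf_self hu), mem_compOf_self hvC₁⟩
  intro x hx
  by_cases hxW : x ∈ W₀
  · have hD := isCompOf_compOf (ends := ends) hxW
    refine ⟨_, .inl hD, mem_compOf_self hxW, hZ.subset_of_connOn (fun p hp => mem_compl.2
      fun hpC₁ => ?_) hD.2.2.1 (mem_compOf_self hxW) hx⟩
    exact hZC₁ hx (hD.eq_of_mem hC₁ hp hpC₁ ▸ mem_compOf_self hxW)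
  · have hD := isCompOf_compOf (ends := ends) (mem_compl.2 hxW)
    refine ⟨_, .inr hD, mem_compOf_self (mem_compl.2 hxW), hZ.subset_of_connOn (fun p hp =>
      mem_compl.2 fun hpC₁ => ?_) hD.2.2.1 (mem_compOf_self (mem_compl.2 hxW)) hx⟩
    exact mem_compl.1 (hD.2.1 hp) (hC₁.2.1 hpC₁)

lemma IntegralAt.exists_semistableLB (hconn : ConnF ends (univ : Finset E)) {q : V → ℚ} {qz : ℤ}
    (hq : ∑ v, q v = qz) {W₀ : Finset V} (hint : IntegralAt ends q W₀) {u v : V} (hu : u ∈ W₀)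
    (hv : v ∉ W₀) :
    ∃ W : Finset V, W.Nonempty ∧ W ≠ univ ∧ ConnOn ends W ∧ ConnOn ends Wᶜ ∧ u ∉ W ∧ v ∈ W ∧
      ∃ d : V → ℤ, SemistableLB ends q d ∧
        ((∑ w ∈ W, d w : ℤ) : ℚ) = (∑ w ∈ W, q w) - (valAB ends W Wᶜ : ℚ) / 2 := by
  obtain ⟨Z, hZ, hZc, ⟨k, hk⟩, huZ, hvZ⟩ := hint.exists_separating hconn hu hv
  obtain ⟨d, hd, hdZ⟩ := exists_semistableLB_of_connOn hq hZ hZc hk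
  exact ⟨Z, ⟨v, hvZ⟩, fun h => huZ (h ▸ mem_univ u), hZ, hZc, huZ, hvZ, d, hd,
    by rw [hdZ, ← hk]; rfl⟩

end Polarization

/-- if `q` is not general then there is a proper subcurve `W` with
`W` and `Wᶜ` connected and a `q`-semistable line bundle `d` with
deg_W d = q_W - δ_W/2; if moreover `q` is not non-degenerate, `W` can be chosen
not to be a spine. -/
theorem stmt17 [Fintype V] [Fintype E] [DecidableEq V] [DecidableEq E] (ends : E → V × V)
    (hconn : ConnF ends (Finset.univ : Finset E)) (q : V → ℚ) (qz : ℤ)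
    (hq : ∑ v, q v = (qz : ℚ)) :
    (¬ GeneralPol ends q →
      ∃ W : Finset V, W.Nonempty ∧ W ≠ Finset.univ ∧
        ConnOn ends W ∧ ConnOn ends Wᶜ ∧
        ∃ d : V → ℤ, SemistableLB ends q d ∧
          ((∑ w ∈ W, d w : ℤ) : ℚ) = (∑ w ∈ W, q w) - (valAB ends W Wᶜ : ℚ) / 2) ∧
    (¬ NonDegPol ends q →
      ∃ W : Finset V, W.Nonempty ∧ W ≠ Finset.univ ∧
        ConnOn ends W ∧ ConnOn ends Wᶜ ∧ ¬ Spine ends W ∧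
        ∃ d : V → ℤ, SemistableLB ends q d ∧
          ((∑ w ∈ W, d w : ℤ) : ℚ) = (∑ w ∈ W, q w) - (valAB ends W Wᶜ : ℚ) / 2) := by
  constructor
  · intro hgen
    obtain ⟨W₀, ⟨u, hu⟩, hW₀, hint⟩ : ∃ W₀ : Finset V, W₀.Nonempty ∧ W₀ ≠ univ ∧
        IntegralAt ends q W₀ := by
      simpa only [GeneralPol, not_forall, not_not, exists_prop] using hgen
    obtain ⟨v, hv⟩ : ∃ v, v ∉ W₀ := by simpa [eq_univ_iff_forall] using hW₀
    obtain ⟨W, hW, hWu, hWc, hWcc, -, -, hd⟩ := hint.exists_semistableLB hconn hq hu hv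
    exact ⟨W, hW, hWu, hWc, hWcc, hd⟩
  · intro hnd
    obtain ⟨W₀, -, -, hspine, hint⟩ : ∃ W₀ : Finset V, W₀.Nonempty ∧ W₀ ≠ univ ∧
        ¬ Spine ends W₀ ∧ IntegralAt ends q W₀ := by
      simpa only [NonDegPol, not_forall, not_not, exists_prop] using hnd
    obtain ⟨e, hbd, hbr⟩ : ∃ e, Boundary ends W₀ e ∧ ¬ Bridge ends e := by
      simpa only [Spine, not_forall, exists_prop] using hspine
    obtain ⟨u, v, hu, hv, hsep⟩ := hbd.exists_mem_notMem
    obtain ⟨W, hW, hWu, hWc, hWcc, huW, hvW, hd⟩ := hint.exists_semistableLB hconn hq hu hv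
    exact ⟨W, hW, hWu, hWc, hWcc, fun hs => hbr (hs e (hsep W huW hvW)), hd⟩
end
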